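/- arXiv:2112.02545 — 12 statements merged into one kernel-verified Lean document; each statement's English description precedes it below -/
import Mathlib

section
/- Let N ≥ 3 be an integer, α = π/N, t a real number, and for each integer k set ν_k = 2αk + t. Then the sum over k = 1, …, N of cos(ν_k)·cos(ν_{k−1}) equals (N/2)·cos(2α). -/
/-!
By the product-to-sum formula, `cos ν_k · cos ν_{k-1} = (cos 2α + cos (4αk + c)) / 2` for a
constant `c`. The terms `cos (4αk + c)` are the real parts of `e^{ic} ζ^k` with
`ζ = e^{4πi/N}`, an `N`-th root of unity that differs from `1` as soon as `N ∤ 2`, so they sum to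
zero over a full period, leaving `N · cos 2α / 2`.
-/

open Real Finset

theorem sum_range_cos_mul_add_eq_zero {N : ℕ} {θ : ℝ} (hne : Complex.exp (θ * Complex.I) ≠ 1)
    (hpow : Complex.exp (θ * Complex.I) ^ N = 1) (c : ℝ) :
    ∑ k ∈ range N, cos (θ * k + c) = 0 := by
  have hgeom : ∑ k ∈ range N, Complex.exp (θ * Complex.I) ^ k = 0 := by
    rw [geom_sum_eq hne, hpow, sub_self, zero_div]
  calc ∑ k ∈ range N, cos (θ * k + c)
      = (Complex.exp (c * Complex.I) * ∑ k ∈ range N, Complex.exp (θ * Complex.I) ^ k).re := by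
        rw [mul_sum, Complex.re_sum]
        refine sum_congr rfl fun k _ => ?_
        rw [← Complex.exp_nat_mul, ← Complex.exp_add, ← Complex.exp_ofReal_mul_I_re]
        push_cast
        ring_nf
    _ = 0 := by rw [hgeom, mul_zero, Complex.zero_re]

theorem sum_range_cos_two_pi_mul_div_mul_add_eq_zero {N m : ℕ} (hm : ¬N ∣ m) (c : ℝ) :
    ∑ k ∈ range N, cos (2 * π * m / N * k + c) = 0 := by
  obtain rfl | hN := eq_or_ne N 0
  · rw [range_zero, sum_empty]
  have hζ := Complex.isPrimitiveRoot_exp N hN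
  have hz : Complex.exp (↑(2 * π * m / N) * Complex.I) =
      Complex.exp (2 * π * Complex.I / N) ^ m := by
    rw [← Complex.exp_nat_mul]
    congr 1
    push_cast
    ring
  refine sum_range_cos_mul_add_eq_zero ?_ ?_ c <;> rw [hz]
  · rwa [Ne, hζ.pow_eq_one_iff_dvd]
  · rw [← pow_mul, mul_comm m N, pow_mul, hζ.pow_eq_one, one_pow]

/-- For `N ≥ 3`, `α = π/N`, `ν_k = 2αk + t`, the sum over `k = 1, …, N` of
`cos(ν_k)·cos(ν_{k−1})` equals `(N/2)·cos(2α)`. -/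
theorem sum_cos_mul_cos_pred (N : ℕ) (hN : 3 ≤ N) (t : ℝ) :
    ∑ k ∈ Finset.Icc 1 N,
      Real.cos (2 * (Real.pi / N) * (k : ℝ) + t) *
        Real.cos (2 * (Real.pi / N) * ((k : ℝ) - 1) + t) =
      ((N : ℝ) / 2) * Real.cos (2 * (Real.pi / N)) := by
  set α := π / N
  have hterm (k : ℕ) :
      cos (2 * α * ((k + 1 : ℕ) : ℝ) + t) * cos (2 * α * (((k + 1 : ℕ) : ℝ) - 1) + t) =
        (cos (2 * α) + cos (2 * π * (2 : ℕ) / N * k + (2 * α + 2 * t))) / 2 := by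
    rw [eq_div_iff two_ne_zero, mul_comm, ← mul_assoc, two_mul_cos_mul_cos]
    congr 2 <;> push_cast <;> ring
  have hN2 : ¬N ∣ 2 := fun h => by linarith [Nat.le_of_dvd two_pos h]
  rw [show Icc 1 N = Ico (0 + 1) (N + 1) from rfl, ← sum_Ico_add', ← range_eq_Ico]
  simp only [hterm, ← sum_div, sum_add_distrib, sum_const, card_range, nsmul_eq_mul,
    sum_range_cos_two_pi_mul_div_mul_add_eq_zero hN2]
  ring
end

section
/- The sum over k = 1, …, N of 1/s_k² equals N·(d²·cos²α + (d⁴ + 1)/4)/((1 − d²)²·sin²α); in particular it does not depend on t. -/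
/-!
On the unit circle `conj z = z⁻¹`, so `w = (d - z) / (1 - d z)` is a Möbius image of `z` and
`s_k = (1 - d²) |z_k - z_{k-1}| / (|1 - d z_k| |1 - d z_{k-1}|)`, where
`|z_k - z_{k-1}| = 2 sin α` and `|1 - d z_k|² = 1 - 2 d cos θ_k + d²`. Hence `1 / s_k²` is a
trigonometric polynomial of degree two in `θ_k = 2 α k + t`; as `N ≥ 3`, its first and second
harmonics sum to zero over the `N` vertices, leaving `N` times its constant term.
-/

open Real Finset

open ComplexConjugate in
noncomputable def secondIntersection (d : ℝ) (x : ℂ) : ℂ :=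
  (d * conj x - 1) / (conj x - d)

open ComplexConjugate in
theorem secondIntersection_of_norm_eq_one (d : ℝ) {x : ℂ} (hx : ‖x‖ = 1) :
    secondIntersection d x = (d - x) / (1 - d * x) := by
  have hx0 : x ≠ 0 := norm_ne_zero_iff.mp (by simp [hx])
  have hxx : conj x * x = 1 := by
    rw [mul_comm, Complex.mul_conj, Complex.normSq_eq_norm_sq, hx]; norm_num
  rw [secondIntersection, ← mul_div_mul_right _ _ hx0]
  congr 1
  · linear_combination (d : ℂ) * hxx
  · linear_combination hxx

theorem one_sub_mul_ne_zero_of_norm_lt_one {𝕜 : Type*} [NormedDivisionRing 𝕜] {a x : 𝕜}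
    (ha : ‖a‖ < 1) (hx : ‖x‖ = 1) : 1 - a * x ≠ 0 := by
  rw [sub_ne_zero]
  intro h
  have := congrArg norm h
  rw [norm_one, norm_mul, hx, mul_one] at this
  linarith

theorem div_one_sub_mul_sub_div_one_sub_mul {K : Type*} [Field K] {a x y : K}
    (hx : 1 - a * x ≠ 0) (hy : 1 - a * y ≠ 0) :
    (a - x) / (1 - a * x) - (a - y) / (1 - a * y) =
      (1 - a ^ 2) * (y - x) / ((1 - a * x) * (1 - a * y)) := by
  rw [div_sub_div _ _ hx hy]
  ring

open Complex in
theorem norm_sq_one_sub_ofReal_mul_exp (d θ : ℝ) :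
    ‖1 - d * cexp (I * θ)‖ ^ 2 = 1 - 2 * d * Real.cos θ + d ^ 2 := by
  rw [← normSq_eq_norm_sq, normSq_apply, mul_comm I]
  simp only [sub_re, one_re, mul_re, ofReal_re, exp_ofReal_mul_I_re, ofReal_im,
    exp_ofReal_mul_I_im, zero_mul, sub_zero, sub_im, one_im, mul_im, add_zero, zero_sub, mul_neg,
    neg_mul, neg_neg]
  linear_combination (d ^ 2) * Real.sin_sq_add_cos_sq θ

open Complex in
theorem norm_exp_I_mul_add_sub_exp (φ β : ℝ) :
    ‖cexp (I * (φ + β : ℝ)) - cexp (I * φ)‖ = |2 * Real.sin (β / 2)| := by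
  rw [ofReal_add, mul_add, Complex.exp_add, ← mul_sub_one, norm_mul, norm_exp_I_mul_ofReal,
    norm_exp_I_mul_ofReal_sub_one, one_mul, Real.norm_eq_abs]

open Complex in
theorem one_div_norm_sq_secondIntersection_sub {d : ℝ} (hd : |d| < 1) (φ β : ℝ) :
    1 / ‖secondIntersection d (cexp (I * (φ + β : ℝ))) -
        secondIntersection d (cexp (I * φ))‖ ^ 2 =
      (1 - 2 * d * Real.cos (φ + β) + d ^ 2) * (1 - 2 * d * Real.cos φ + d ^ 2) /
        ((1 - d ^ 2) ^ 2 * (2 * Real.sin (β / 2)) ^ 2) := by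
  have hden : ∀ θ : ℝ, 1 - (d : ℂ) * cexp (I * θ) ≠ 0 := fun θ ↦
    one_sub_mul_ne_zero_of_norm_lt_one (by simpa using hd) (norm_exp_I_mul_ofReal θ)
  rw [secondIntersection_of_norm_eq_one d (norm_exp_I_mul_ofReal _),
    secondIntersection_of_norm_eq_one d (norm_exp_I_mul_ofReal _),
    div_one_sub_mul_sub_div_one_sub_mul (hden _) (hden _), norm_div, norm_mul, norm_mul,
    norm_sub_rev (cexp _), norm_exp_I_mul_add_sub_exp, div_pow, mul_pow, mul_pow,
    norm_sq_one_sub_ofReal_mul_exp, norm_sq_one_sub_ofReal_mul_exp, one_div_div]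
  norm_cast
  rw [Real.norm_eq_abs, sq_abs, sq_abs]

theorem one_sub_two_mul_cos_add_sq_mul (d a b : ℝ) :
    (1 - 2 * d * cos a + d ^ 2) * (1 - 2 * d * cos b + d ^ 2) =
      (1 + d ^ 2) ^ 2 + 2 * d ^ 2 * (cos (a - b) + cos (a + b)) -
        2 * d * (1 + d ^ 2) * (cos a + cos b) := by
  rw [cos_sub, cos_add]
  ring

open Complex in
theorem sum_range_cos_eq_zero {N m : ℕ} (hm : ¬ N ∣ m) (c : ℝ) :
    ∑ j ∈ range N, Real.cos (2 * π * m * j / N + c) = 0 := by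
  rcases N.eq_zero_or_pos with rfl | hN
  · simp
  have hμ := isPrimitiveRoot_exp N hN.ne'
  set ζ := cexp (2 * π * I / N) ^ m
  have hζ : ζ ≠ 1 := by rwa [Ne, hμ.pow_eq_one_iff_dvd]
  have hζN : ζ ^ N = 1 := by rw [← pow_mul, mul_comm m N, pow_mul, hμ.pow_eq_one, one_pow]
  have hexp : ∀ j ∈ range N,
      cexp ((2 * π * m * j / N + c : ℝ) * I) = cexp (c * I) * ζ ^ j := by
    intro j _
    rw [← pow_mul, ← Complex.exp_nat_mul, ← Complex.exp_add]
    congr 1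
    push_cast
    ring
  have hre := congrArg re (sum_congr rfl hexp)
  rw [← mul_sum, geom_sum_eq hζ, hζN, sub_self, zero_div, mul_zero, re_sum, zero_re] at hre
  simpa only [exp_ofReal_mul_I_re] using hre

theorem sum_Icc_cos_eq_zero {N m : ℕ} (hm : ¬ N ∣ m) (c : ℝ) :
    ∑ k ∈ Icc (1 : ℤ) N, cos (2 * π * m * k / N + c) = 0 := by
  rw [Int.Icc_eq_finset_map, sum_map]
  convert sum_range_cos_eq_zero hm (c + 2 * π * m / N) using 2 with j
  · simp
  · simp only [Function.Embedding.trans_apply, Nat.castEmbedding_apply, addLeftEmbedding_apply]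
    push_cast
    ring_nf

/-- Over the Poncelet family of harmonic polygons, the sum of inverse squared
sidelengths is invariant and given by
`N·(d²·cos²α + (d⁴ + 1)/4)/((1 − d²)²·sin²α)`; in particular it does not
depend on `t`. -/
theorem sum_inv_sq_sidelengths (N : ℕ) (hN : 3 ≤ N) (d t : ℝ) (hd : |d| < 1)
    (z w : ℤ → ℂ) (s : ℤ → ℝ)
    (hz : ∀ k : ℤ, z k = Complex.exp (Complex.I *
      ((2 * (Real.pi / N) * (k : ℝ) + t : ℝ) : ℂ)))
    (hw : ∀ k : ℤ, w k = ((d : ℂ) * (starRingEnd ℂ) (z k) - 1) /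
      ((starRingEnd ℂ) (z k) - (d : ℂ)))
    (hs : ∀ k : ℤ, s k = ‖w k - w (k - 1)‖) :
    ∑ k ∈ Finset.Icc (1 : ℤ) N, 1 / (s k) ^ 2 =
      (N : ℝ) * (d ^ 2 * Real.cos (Real.pi / N) ^ 2 + (d ^ 4 + 1) / 4) /
        ((1 - d ^ 2) ^ 2 * Real.sin (Real.pi / N) ^ 2) := by
  set α := π / N
  have hw' : ∀ k, w k = secondIntersection d (z k) := hw
  have hterm : ∀ k : ℤ, 1 / s k ^ 2 =
      ((1 + d ^ 2) ^ 2 + 2 * d ^ 2 * cos (2 * α) +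
        2 * d ^ 2 * cos (2 * π * (2 : ℕ) * k / N + (2 * t - 2 * α)) -
        2 * d * (1 + d ^ 2) * (cos (2 * π * (1 : ℕ) * k / N + t) +
          cos (2 * π * (1 : ℕ) * k / N + (t - 2 * α)))) /
        ((1 - d ^ 2) ^ 2 * (2 * sin α) ^ 2) := by
    intro k
    have hk : 2 * α * k + t = (2 * α * (k - 1 : ℤ) + t) + 2 * α := by push_cast; ring
    rw [hs, hw', hw', hz, hz, hk, one_div_norm_sq_secondIntersection_sub hd,
      one_sub_two_mul_cos_add_sq_mul]
    simp only [α]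
    push_cast
    ring_nf
  have h1 : ¬ N ∣ 1 := Nat.not_dvd_of_pos_of_lt one_pos (by omega)
  have h2 : ¬ N ∣ 2 := Nat.not_dvd_of_pos_of_lt two_pos (by omega)
  have hsin : sin α ≠ 0 :=
    (sin_pos_of_pos_of_lt_pi (by positivity) (div_lt_self pi_pos (by norm_cast; omega))).ne'
  have hd2 : 1 - d ^ 2 ≠ 0 := by nlinarith [abs_lt.mp hd]
  rw [sum_congr rfl fun k _ ↦ hterm k, ← sum_div]
  simp only [sum_sub_distrib, sum_add_distrib, ← mul_sum, sum_Icc_cos_eq_zero h1,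
    sum_Icc_cos_eq_zero h2, sum_const, Int.card_Icc, add_sub_cancel_right, Int.toNat_natCast,
    nsmul_eq_mul, cos_two_mul]
  field_simp
  ring
end

section
/- Assume d ≠ 0 and that z_k has nonzero imaginary part (i.e., sin(2αk + t) ≠ 0). Then the four points 0, w_k, 1/d, and z_k are concyclic: there exist a point c ∈ ℂ and a radius r > 0 with |0 − c| = |w_k − c| = |1/d − c| = |z_k − c| = r. -/
/-!
The inversion `y ↦ (conj y)⁻¹` fixes the unit circle pointwise, sends `d` to `1/d`, and maps the
line `2 Re(conj c * y) = 1` onto the circle through `0` with centre `c`. Hence it suffices that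
`d`, `z_k`, `w_k` lie on one such line: they are collinear by construction, and the line through
`d` and `z_k` misses `0` because `d ≠ 0` and `z_k` is not real.
-/

open ComplexConjugate

namespace Complex

theorem norm_inv_conj_sub_eq_norm_iff {y : ℂ} (hy : y ≠ 0) (c : ℂ) :
    ‖(conj y)⁻¹ - c‖ = ‖c‖ ↔ 2 * (conj c * y).re = 1 := by
  have hny : 0 < normSq y := normSq_pos.2 hy
  have hinv : (conj y)⁻¹ = y * ((normSq y)⁻¹ : ℝ) := by
    rw [inv_def, conj_conj, normSq_conj]
  rw [← sq_eq_sq₀ (norm_nonneg _) (norm_nonneg _), ← normSq_eq_norm_sq, ← normSq_eq_norm_sq,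
    normSq_sub, hinv, normSq_mul, normSq_ofReal, mul_right_comm, re_mul_ofReal, mul_comm y]
  constructor <;> intro h
  · field_simp at h
    linarith
  · field_simp
    linarith

theorem norm_sub_eq_norm_iff_of_norm_eq_one {y : ℂ} (hy : ‖y‖ = 1) (c : ℂ) :
    ‖y - c‖ = ‖c‖ ↔ 2 * (conj c * y).re = 1 := by
  have hy0 : y ≠ 0 := norm_ne_zero_iff.1 (by rw [hy]; exact one_ne_zero)
  rw [← norm_inv_conj_sub_eq_norm_iff hy0, ← RCLike.inv_eq_conj hy, inv_inv]

theorem exists_two_re_conj_mul_eq_one {p q : ℂ} (hpq : (conj p * q).im ≠ 0) :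
    ∃ c : ℂ, 2 * (conj c * p).re = 1 ∧ 2 * (conj c * q).re = 1 := by
  -- `conj c * (p - q)` is purely imaginary, so `conj c * p` and `conj c * q` have equal real parts.
  refine ⟨I * ((2 * (conj p * q).im)⁻¹ : ℝ) * (p - q), ?_, ?_⟩ <;>
  · simp only [map_mul, map_sub, conj_I, conj_ofReal, mul_re, mul_im, neg_re, I_re, I_im,
      ofReal_re, ofReal_im, sub_re, sub_im, conj_re, conj_im, neg_mul, ← sub_eq_add_neg] at hpq ⊢
    field_simp
    ring

theorem two_re_conj_mul_add_smul_sub_eq_one {c p q : ℂ} (hp : 2 * (conj c * p).re = 1)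
    (hq : 2 * (conj c * q).re = 1) (s : ℝ) : 2 * (conj c * (p + s * (q - p))).re = 1 := by
  have : conj c * (p + s * (q - p)) = conj c * p + s * (conj c * q - conj c * p) := by ring
  rw [this, add_re, re_ofReal_mul, sub_re]
  linear_combination (1 - s) * hp + s * hq

/-- For `‖z‖ = 1` and real `d`, the second intersection of the line through `d` and `z`
with the unit circle. -/
noncomputable def unitCircleSecondInter (d : ℝ) (z : ℂ) : ℂ := (d * conj z - 1) / (conj z - d)

theorem norm_unitCircleSecondInter {d : ℝ} {z : ℂ} (hz : ‖z‖ = 1) (hzd : conj z ≠ d) :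
    ‖unitCircleSecondInter d z‖ = 1 := by
  have hzz : conj z * z = 1 := by
    rw [mul_comm, mul_conj, normSq_eq_norm_sq, hz]; norm_num
  have hnum : (d : ℂ) * conj z - 1 = conj z * (d - z) := by
    linear_combination hzz
  have hden : conj z - d = conj (z - d) := by rw [map_sub, conj_ofReal]
  have hzd' : z - d ≠ 0 := sub_ne_zero.2 fun h => hzd (by rw [h, conj_ofReal])
  rw [unitCircleSecondInter, norm_div, hnum, norm_mul, norm_conj, hz, one_mul, hden, norm_conj,
    norm_sub_rev, div_self (norm_ne_zero_iff.2 hzd')]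

theorem exists_unitCircleSecondInter_eq_add_smul_sub (d : ℝ) {z : ℂ} (hzd : conj z ≠ d) :
    ∃ s : ℝ, unitCircleSecondInter d z = d + s * (z - d) := by
  have hz : z - d ≠ 0 := sub_ne_zero.2 fun h => hzd (by rw [h, conj_ofReal])
  refine ⟨(d ^ 2 - 1) / normSq (z - d), ?_⟩
  have hconj : (z - d) * (conj z - d) = normSq (z - d) := by
    rw [← mul_conj, map_sub, conj_ofReal]
  rw [unitCircleSecondInter, div_eq_iff (sub_ne_zero.2 hzd), add_mul, mul_assoc, hconj,
    ← ofReal_mul, div_mul_cancel₀ _ (normSq_pos.2 hz).ne']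
  push_cast
  ring

end Complex

open Complex

theorem concyclic_zero_w_invd_z_general (N : ℕ) (d t : ℝ)
    (hd0 : d ≠ 0) (z w : ℤ → ℂ)
    (hz : ∀ k : ℤ, z k = Complex.exp (Complex.I *
      ((2 * (Real.pi / N) * (k : ℝ) + t : ℝ) : ℂ)))
    (hw : ∀ k : ℤ, w k = ((d : ℂ) * (starRingEnd ℂ) (z k) - 1) /
      ((starRingEnd ℂ) (z k) - (d : ℂ)))
    (k : ℤ) (hk : Real.sin (2 * (Real.pi / N) * (k : ℝ) + t) ≠ 0) :
    ∃ (c : ℂ) (r : ℝ), 0 < r ∧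
      ‖0 - c‖ = r ∧
      ‖w k - c‖ = r ∧
      ‖(1 / d : ℝ) - c‖ = r ∧
      ‖z k - c‖ = r := by
  set θ : ℝ := 2 * (Real.pi / N) * (k : ℝ) + t
  have hz_norm : ‖z k‖ = 1 := by rw [hz, mul_comm]; exact norm_exp_ofReal_mul_I θ
  have hz_im : (z k).im = Real.sin θ := by rw [hz, mul_comm, exp_ofReal_mul_I_im]
  have hzd : conj (z k) ≠ d := fun h => hk (by simpa [hz_im] using congrArg im h)
  obtain ⟨c, hcd, hcz⟩ :=
    exists_two_re_conj_mul_eq_one (p := d) (q := z k) (by simp [hz_im, hd0, hk])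
  obtain ⟨s, hs⟩ := exists_unitCircleSecondInter_eq_add_smul_sub d hzd
  have hcw : 2 * (conj c * unitCircleSecondInter d (z k)).re = 1 := by
    rw [hs]; exact two_re_conj_mul_add_smul_sub_eq_one hcd hcz s
  have hc : c ≠ 0 := by rintro rfl; simp at hcd
  have hinvd : ((1 / d : ℝ) : ℂ) = (conj (d : ℂ))⁻¹ := by push_cast; rw [conj_ofReal, one_div]
  refine ⟨c, ‖c‖, norm_pos_iff.2 hc, by rw [zero_sub, norm_neg], ?_, ?_, ?_⟩
  · rw [hw k]
    exact (norm_sub_eq_norm_iff_of_norm_eq_one (norm_unitCircleSecondInter hz_norm hzd) c).2 hcw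
  · rw [hinvd]; exact (norm_inv_conj_sub_eq_norm_iff (ofReal_ne_zero.2 hd0) c).2 hcd
  · exact (norm_sub_eq_norm_iff_of_norm_eq_one hz_norm c).2 hcz

/-- If `d ≠ 0` and `z_k` has nonzero imaginary part, then the four points
`0`, `w_k`, `1/d`, `z_k` are concyclic. -/
theorem concyclic_zero_w_invd_z (N : ℕ) (hN : 3 ≤ N) (d t : ℝ) (hd : |d| < 1)
    (hd0 : d ≠ 0) (z w : ℤ → ℂ)
    (hz : ∀ k : ℤ, z k = Complex.exp (Complex.I *
      ((2 * (Real.pi / N) * (k : ℝ) + t : ℝ) : ℂ)))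
    (hw : ∀ k : ℤ, w k = ((d : ℂ) * (starRingEnd ℂ) (z k) - 1) /
      ((starRingEnd ℂ) (z k) - (d : ℂ)))
    (k : ℤ) (hk : Real.sin (2 * (Real.pi / N) * (k : ℝ) + t) ≠ 0) :
    ∃ (c : ℂ) (r : ℝ), 0 < r ∧
      ‖0 - c‖ = r ∧
      ‖w k - c‖ = r ∧
      ‖(1 / d : ℝ) - c‖ = r ∧
      ‖z k - c‖ = r :=
  concyclic_zero_w_invd_z_general N d t hd0 z w hz hw k hk
end

section
/- Assume d ≠ 0 and sin(2αk + t) ≠ 0 for every k = 1, …, N. For each k, let c_k ∈ ℂ and r_k > 0 satisfy |w_k − c_k| = |d − c_k| = |1/d − c_k| = r_k (so the circle of center c_k and radius r_k is the generalized Apollonius circle through w_k and the two limiting points d and 1/d). Then the sum over k = 1, …, N of 1/r_k² equals 2N/(1/d − d)²; in particular it does not depend on t. -/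
/-!
The points `d` and `1/d` are inverse with respect to the unit circle, so every circle through
both is orthogonal to it: its centre `c` has `Re c = (d + 1/d)/2` and `r² = |c|² - 1`. For `w` on
the unit circle, `|w - c| = r` then becomes linear in `Im c`, which for `w = w_k` gives
`Im c = -(1/d - d) cot θ_k / 2` with `θ_k = 2αk + t`, hence `r_k = |1/d - d| / (2 |sin θ_k|)`
(the chord `[d, 1/d]` is seen from `w_k` under the angle `θ_k` or `π - θ_k`). The sum of
`sin² θ_k` over the vertices of a regular `N`-gon is `N/2` because the squares of the `N`-th
roots of unity still sum to zero.
-/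

open Real Finset ComplexConjugate

theorem sum_range_cos_two_pi_mul_div_add {N m : ℕ} (hm : ¬N ∣ m) (s : ℝ) :
    ∑ k ∈ range N, cos (2 * π * m * k / N + s) = 0 := by
  obtain rfl | hN := eq_or_ne N 0
  · simp
  have hζ := Complex.isPrimitiveRoot_exp N hN
  set ζ := Complex.exp (2 * π * Complex.I / N) ^ m
  have hζN : ζ ^ N = 1 := by rw [pow_right_comm, hζ.pow_eq_one, one_pow]
  have hζ1 : ζ ≠ 1 := by rwa [Ne, hζ.pow_eq_one_iff_dvd]
  have hexp (k : ℕ) :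
      Complex.exp ((2 * π * m * k / N + s : ℝ) * Complex.I) =
        Complex.exp (s * Complex.I) * ζ ^ k := by
    rw [← pow_mul, ← Complex.exp_nat_mul, ← Complex.exp_add]
    push_cast
    ring_nf
  have hsum : ∑ k ∈ range N, Complex.exp ((2 * π * m * k / N + s : ℝ) * Complex.I) = 0 := by
    simp_rw [hexp, ← mul_sum, geom_sum_eq hζ1, hζN, sub_self, zero_div, mul_zero]
  simpa [← Complex.exp_ofReal_mul_I_re] using congrArg Complex.re hsum

theorem sum_Icc_sin_sq_two_pi_div_mul_add {N : ℕ} (hN : 3 ≤ N) (t : ℝ) :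
    ∑ k ∈ Icc (1 : ℤ) N, sin (2 * (π / N) * k + t) ^ 2 = N / 2 := by
  have hcos := sum_range_cos_two_pi_mul_div_add (N := N) (m := 2)
    (fun h => by have := Nat.le_of_dvd two_pos h; omega) (2 * (2 * (π / N)) + 2 * t)
  rw [Int.Icc_eq_finset_map, sum_map, add_sub_cancel_right, Int.toNat_natCast]
  simp only [Function.Embedding.trans_apply, Nat.castEmbedding_apply, addLeftEmbedding_apply]
  calc ∑ j ∈ range N, sin (2 * (π / N) * ((1 + j : ℤ) : ℝ) + t) ^ 2
      = ∑ j ∈ range N,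
          (1 / 2 - cos (2 * π * (2 : ℕ) * j / N + (2 * (2 * (π / N)) + 2 * t)) / 2) := by
        refine sum_congr rfl fun j _ => ?_
        rw [sin_sq_eq_half_sub]
        congr 3
        push_cast
        field_simp
        ring
    _ = N / 2 := by
        rw [sum_sub_distrib, ← sum_div, ← sum_div, hcos]
        simp

theorem Complex.sq_norm_ofReal_sub (p : ℝ) (c : ℂ) :
    ‖(p : ℂ) - c‖ ^ 2 = (p - c.re) ^ 2 + c.im ^ 2 := by
  rw [Complex.sq_norm, Complex.normSq_apply]
  simp only [Complex.sub_re, Complex.sub_im, Complex.ofReal_re, Complex.ofReal_im]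
  ring

theorem Complex.re_eq_midpoint_of_norm_sub_eq {p q : ℝ} (hpq : p ≠ q) {c : ℂ}
    (h : ‖(p : ℂ) - c‖ = ‖(q : ℂ) - c‖) : c.re = (p + q) / 2 := by
  have h2 := congrArg (· ^ 2) h
  simp only [Complex.sq_norm_ofReal_sub] at h2
  have : (p - q) * (p + q - 2 * c.re) = 0 := by linear_combination h2
  linarith [(mul_eq_zero.mp this).resolve_left (sub_ne_zero.mpr hpq)]

theorem one_add_sq_sub_two_mul_mul_cos_pos (d : ℝ) {θ : ℝ} (hθ : sin θ ≠ 0) :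
    0 < 1 + d ^ 2 - 2 * d * cos θ := by
  nlinarith [sq_nonneg (d - cos θ), sin_sq_add_cos_sq θ, pow_pos (sq_pos_of_ne_zero hθ) 1]

noncomputable def harmonicVertex (d : ℝ) (z : ℂ) : ℂ := (d * conj z - 1) / (conj z - d)

theorem harmonicVertex_exp_mul_I_eq (d : ℝ) {θ : ℝ} (hθ : sin θ ≠ 0) :
    harmonicVertex d (Complex.exp (Complex.I * θ)) =
      ((2 * d - (1 + d ^ 2) * cos θ : ℝ) - ((1 - d ^ 2) * sin θ : ℝ) * Complex.I) /
        (1 + d ^ 2 - 2 * d * cos θ : ℝ) := by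
  have hD := (one_add_sq_sub_two_mul_mul_cos_pos d hθ).ne'
  have hz : Complex.exp (Complex.I * θ) = cos θ + sin θ * Complex.I := by
    rw [mul_comm, Complex.exp_mul_I, ← Complex.ofReal_cos, ← Complex.ofReal_sin]
  have hden : (conj (Complex.exp (Complex.I * θ)) - d) ≠ 0 := by
    intro h
    apply hθ
    simpa [hz, Complex.sin_ofReal_re] using congrArg Complex.im h
  rw [harmonicVertex, div_eq_div_iff hden (by exact_mod_cast hD), hz]
  simp only [map_add, map_mul, Complex.conj_ofReal, Complex.conj_I]
  push_cast
  linear_combination (1 - (d : ℂ) ^ 2) * Complex.cos_sq_add_sin_sq (θ : ℂ) +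
    ((d : ℂ) ^ 2 - 1) * Complex.sin θ ^ 2 * Complex.I_sq

theorem im_eq_of_norm_harmonicVertex_sub_eq {d θ : ℝ} (hd0 : d ≠ 0) (hd1 : d ^ 2 ≠ 1)
    (hθ : sin θ ≠ 0) {c : ℂ} (hre : c.re = (d + 1 / d) / 2)
    (hw : ‖harmonicVertex d (Complex.exp (Complex.I * θ)) - c‖ = ‖(d : ℂ) - c‖) :
    c.im = -((1 / d - d) * cos θ) / (2 * sin θ) := by
  set w := harmonicVertex d (Complex.exp (Complex.I * θ))
  have hD := (one_add_sq_sub_two_mul_mul_cos_pos d hθ).ne'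
  have hw_re : w.re = (2 * d - (1 + d ^ 2) * cos θ) / (1 + d ^ 2 - 2 * d * cos θ) := by
    rw [show w = _ from harmonicVertex_exp_mul_I_eq d hθ, Complex.div_ofReal_re, Complex.sub_re,
      Complex.ofReal_re, Complex.re_ofReal_mul, Complex.I_re, mul_zero, sub_zero]
  have hw_im : w.im = -((1 - d ^ 2) * sin θ) / (1 + d ^ 2 - 2 * d * cos θ) := by
    rw [show w = _ from harmonicVertex_exp_mul_I_eq d hθ, Complex.div_ofReal_im, Complex.sub_im,
      Complex.ofReal_im, Complex.im_ofReal_mul, Complex.I_im, mul_one, zero_sub]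
  have h2 := congrArg (· ^ 2) hw
  rw [Complex.sq_norm_ofReal_sub, Complex.sq_norm, Complex.normSq_apply] at h2
  simp only [Complex.sub_re, Complex.sub_im, hw_re, hw_im, hre] at h2
  field_simp at h2 ⊢
  refine mul_left_cancel₀
    (by positivity : (1 - d ^ 2) * (4 * d * (1 + d ^ 2 - 2 * d * cos θ)) ≠ 0) ?_
  linear_combination h2 - 4 * d ^ 2 * (1 - d ^ 2) ^ 2 * sin_sq_add_cos_sq θ

theorem one_div_sq_norm_sub_eq_of_apollonius {d θ : ℝ} (hd0 : d ≠ 0) (hd1 : d ^ 2 ≠ 1)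
    (hθ : sin θ ≠ 0) {c : ℂ} (hdc : ‖(d : ℂ) - c‖ = ‖((1 / d : ℝ) : ℂ) - c‖)
    (hw : ‖harmonicVertex d (Complex.exp (Complex.I * θ)) - c‖ = ‖(d : ℂ) - c‖) :
    1 / ‖(d : ℂ) - c‖ ^ 2 = 4 * sin θ ^ 2 / (1 / d - d) ^ 2 := by
  have hne : d ≠ 1 / d := by
    intro h
    field_simp at h
    exact hd1 h
  have hre := Complex.re_eq_midpoint_of_norm_sub_eq hne hdc
  have hr2 : ‖(d : ℂ) - c‖ ^ 2 = (1 / d - d) ^ 2 / (4 * sin θ ^ 2) := by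
    rw [Complex.sq_norm_ofReal_sub, hre, im_eq_of_norm_harmonicVertex_sub_eq hd0 hd1 hθ hre hw]
    field_simp
    linear_combination 4 * (1 - d ^ 2) ^ 2 * sin_sq_add_cos_sq θ
  rw [hr2, one_div_div]

theorem sum_inv_sq_apollonius_radii_general (N : ℕ) (hN : 3 ≤ N) (d t : ℝ) (hd : |d| < 1)
    (hd0 : d ≠ 0) (z w : ℤ → ℂ)
    (hz : ∀ k : ℤ, z k = Complex.exp (Complex.I *
      ((2 * (Real.pi / N) * (k : ℝ) + t : ℝ) : ℂ)))
    (hw : ∀ k : ℤ, w k = ((d : ℂ) * (starRingEnd ℂ) (z k) - 1) /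
      ((starRingEnd ℂ) (z k) - (d : ℂ)))
    (hsin : ∀ k ∈ Finset.Icc (1 : ℤ) N,
      Real.sin (2 * (Real.pi / N) * (k : ℝ) + t) ≠ 0)
    (c : ℤ → ℂ) (r : ℤ → ℝ)
    (hc : ∀ k ∈ Finset.Icc (1 : ℤ) N,
      ‖w k - c k‖ = r k ∧
      ‖(d : ℂ) - c k‖ = r k ∧
      ‖((1 / d : ℝ) : ℂ) - c k‖ = r k) :
    ∑ k ∈ Finset.Icc (1 : ℤ) N, 1 / (r k) ^ 2 =
      2 * (N : ℝ) / (1 / d - d) ^ 2 := by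
  have hd1 : d ^ 2 ≠ 1 := ((sq_lt_one_iff_abs_lt_one d).mpr hd).ne
  calc ∑ k ∈ Icc (1 : ℤ) N, 1 / r k ^ 2
      = ∑ k ∈ Icc (1 : ℤ) N, 4 / (1 / d - d) ^ 2 * sin (2 * (π / N) * k + t) ^ 2 := by
        refine sum_congr rfl fun k hk => ?_
        obtain ⟨hwc, hdc, hdc'⟩ := hc k hk
        have hwk :
            w k = harmonicVertex d (Complex.exp (Complex.I * (2 * (π / N) * k + t : ℝ))) := by
          rw [hw k, hz k]; rfl
        rw [← hdc, one_div_sq_norm_sub_eq_of_apollonius hd0 hd1 (hsin k hk) (hdc.trans hdc'.symm)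
          (by rw [← hwk, hwc, hdc])]
        ring
    _ = 2 * N / (1 / d - d) ^ 2 := by
        rw [← mul_sum, sum_Icc_sin_sq_two_pi_div_mul_add hN]
        ring

/-- Over the Poncelet family of harmonic polygons, the sum of the inverse squared
radii of the generalized Apollonius circles (through `w_k` and the two limiting
points `d` and `1/d`) is invariant and given by `2N/(1/d − d)²`; in particular it
does not depend on `t`. -/
theorem sum_inv_sq_apollonius_radii (N : ℕ) (hN : 3 ≤ N) (d t : ℝ) (hd : |d| < 1)
    (hd0 : d ≠ 0) (z w : ℤ → ℂ)
    (hz : ∀ k : ℤ, z k = Complex.exp (Complex.I *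
      ((2 * (Real.pi / N) * (k : ℝ) + t : ℝ) : ℂ)))
    (hw : ∀ k : ℤ, w k = ((d : ℂ) * (starRingEnd ℂ) (z k) - 1) /
      ((starRingEnd ℂ) (z k) - (d : ℂ)))
    (hsin : ∀ k ∈ Finset.Icc (1 : ℤ) N,
      Real.sin (2 * (Real.pi / N) * (k : ℝ) + t) ≠ 0)
    (c : ℤ → ℂ) (r : ℤ → ℝ) (hr : ∀ k ∈ Finset.Icc (1 : ℤ) N, 0 < r k)
    (hc : ∀ k ∈ Finset.Icc (1 : ℤ) N,
      ‖w k - c k‖ = r k ∧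
      ‖(d : ℂ) - c k‖ = r k ∧
      ‖((1 / d : ℝ) : ℂ) - c k‖ = r k) :
    ∑ k ∈ Finset.Icc (1 : ℤ) N, 1 / (r k) ^ 2 =
      2 * (N : ℝ) / (1 / d - d) ^ 2 :=
  sum_inv_sq_apollonius_radii_general N hN d t hd hd0 z w hz hw hsin c r hc
end

section
/- For every index k, the cotangent of the interior angle θ_k of the harmonic N-gon at w_k is given by cot(θ_k) = −2d·cos(2αk + t)/((d² − 1)·sin(2α)) + ρ·cot(2α). -/
open Real

/-!
The map `blaschke d z = (d - z) / (1 - d z)` is the involution of the unit disc swapping `0` and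
`d`; on the unit circle it sends `z` to the second intersection of the line through `z` and `d`,
so `w_k = blaschke d (z_k)`. Writing `ζ = z_k` and `e = exp (2α i)`, the neighbours of `z_k`
are `ζ e⁻¹` and `ζ e`, and the ratio of the two chords of the harmonic polygon issuing from
`w_k` is `(1 - d ζ e) / (d ζ - e)`, a positive real multiple of
`q = 2 d Re ζ - (1 + d²) Re e + (1 - d²) Im e · i`. Since `Im q > 0`, the angle at `w_k` is
`arg q` and its cotangent is `Re q / Im q`.
-/

open Complex ComplexConjugate InnerProductGeometry

def blaschke {K : Type*} [Field K] (d z : K) : K := (d - z) / (1 - d * z)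

section Field

variable {K : Type*} [Field K] {d a b ζ e : K}

lemma blaschke_sub_blaschke (ha : 1 - d * a ≠ 0) (hb : 1 - d * b ≠ 0) :
    blaschke d a - blaschke d b = (1 - d ^ 2) * (b - a) / ((1 - d * a) * (1 - d * b)) := by
  rw [blaschke, blaschke, div_sub_div _ _ ha hb]
  ring

lemma blaschke_sub_blaschke_ne_zero (hd : 1 - d ^ 2 ≠ 0) (hab : a ≠ b)
    (ha : 1 - d * a ≠ 0) (hb : 1 - d * b ≠ 0) : blaschke d a - blaschke d b ≠ 0 := by
  rw [blaschke_sub_blaschke ha hb]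
  exact div_ne_zero (mul_ne_zero hd (sub_ne_zero.2 hab.symm)) (mul_ne_zero ha hb)

lemma blaschke_chord_div_chord (hζ : ζ ≠ 0) (he : e ≠ 0) (he₁ : e ≠ 1)
    (hd : 1 - d ^ 2 ≠ 0) (h₀ : 1 - d * ζ ≠ 0) (hprev : 1 - d * (ζ * e⁻¹) ≠ 0)
    (hnext : 1 - d * (ζ * e) ≠ 0) :
    (blaschke d (ζ * e⁻¹) - blaschke d ζ) / (blaschke d (ζ * e) - blaschke d ζ) =
      (1 - d * (ζ * e)) / (d * ζ - e) := by
  have hde : e - d * ζ ≠ 0 := by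
    contrapose! hprev
    rw [← mul_assoc, ← sub_eq_zero.1 hprev, mul_inv_cancel₀ he, sub_self]
  have he₁' : 1 - e ≠ 0 := sub_ne_zero.2 he₁.symm
  rw [blaschke_sub_blaschke hprev h₀, blaschke_sub_blaschke hnext h₀,
    ← neg_sub e, div_neg, eq_neg_iff_add_eq_zero]
  field_simp
  ring

end Field

namespace Complex

lemma cot_angle_ofReal_mul_one {r : ℝ} (hr : 0 < r) {q : ℂ} (hq : 0 < q.im) :
    Real.cot (angle (r * q) 1) = q.re / q.im := by
  have hq₀ : q ≠ 0 := fun h ↦ by simp [h] at hq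
  rw [Real.cot_eq_cos_div_sin, angle_one_right (mul_ne_zero (ofReal_ne_zero.2 hr.ne') hq₀),
    arg_real_mul q hr, abs_of_nonneg (arg_nonneg_iff.2 hq.le), cos_arg hq₀, sin_arg]
  have : ‖q‖ ≠ 0 := norm_ne_zero_iff.2 hq₀
  field_simp

lemma div_conj_sub_eq_blaschke {d z : ℂ} (hz : ‖z‖ = 1) :
    (d * conj z - 1) / (conj z - d) = blaschke d z := by
  have hz₀ : z ≠ 0 := norm_ne_zero_iff.1 (by rw [hz]; exact one_ne_zero)
  rw [← inv_eq_conj hz, blaschke, ← mul_div_mul_left _ _ hz₀]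
  congr 1 <;> field_simp

section UnitCircle

variable {d : ℝ} {ζ e : ℂ}

lemma ofReal_mul_ne_of_norm_eq_one (hd : |d| < 1) (he : ‖e‖ = 1) (hζ : ‖ζ‖ = 1) :
    d * ζ ≠ e := fun h ↦ by
  have := congrArg norm h
  rw [norm_mul, norm_real, Real.norm_eq_abs, hζ, he, mul_one] at this
  linarith

lemma angle_blaschke_chords (hd : |d| < 1) (hζ : ‖ζ‖ = 1) (he : ‖e‖ = 1)
    (he₁ : e ≠ 1) :
    angle (blaschke (d : ℂ) (ζ * e⁻¹) - blaschke (d : ℂ) ζ)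
      (blaschke (d : ℂ) (ζ * e) - blaschke (d : ℂ) ζ) =
      angle ((1 - d * (ζ * e)) / (d * ζ - e)) 1 := by
  have hd₂ : (1 : ℂ) - (d : ℂ) ^ 2 ≠ 0 := by
    exact_mod_cast (show 0 < 1 - d ^ 2 by nlinarith [abs_lt.1 hd, sq_abs d]).ne'
  have hζ₀ : ζ ≠ 0 := norm_ne_zero_iff.1 (by rw [hζ]; exact one_ne_zero)
  have he₀ : e ≠ 0 := norm_ne_zero_iff.1 (by rw [he]; exact one_ne_zero)
  have hden : ∀ u : ℂ, ‖u‖ = 1 → 1 - d * u ≠ 0 := fun u hu h ↦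
    ofReal_mul_ne_of_norm_eq_one hd norm_one hu (sub_eq_zero.1 h).symm
  have hnext : 1 - d * (ζ * e) ≠ 0 := hden _ (by simp [hζ, he])
  have hchord : blaschke (d : ℂ) (ζ * e) - blaschke (d : ℂ) ζ ≠ 0 :=
    blaschke_sub_blaschke_ne_zero hd₂ (by simpa [hζ₀] using he₁) hnext (hden _ hζ)
  have hprev : 1 - d * (ζ * e⁻¹) ≠ 0 := hden _ (by simp [hζ, he])
  rw [← blaschke_chord_div_chord hζ₀ he₀ he₁ hd₂ (hden _ hζ) hprev hnext,
    ← angle_mul_right (inv_ne_zero hchord), mul_inv_cancel₀ hchord, div_eq_mul_inv]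

lemma one_sub_mul_div_sub_eq_ofReal_mul (hζ : ‖ζ‖ = 1) (he : ‖e‖ = 1) :
    (1 - d * (ζ * e)) / (d * ζ - e) = ((normSq (d * ζ - e))⁻¹ : ℝ) *
      (2 * d * ζ.re - (1 + d ^ 2) * e.re + (1 - d ^ 2) * e.im * I) := by
  have hζ' := normSq_apply ζ
  have he' := normSq_apply e
  rw [normSq_eq_norm_sq, hζ] at hζ'
  rw [normSq_eq_norm_sq, he] at he'
  have hconj : (1 - d * (ζ * e)) * conj (d * ζ - e) =
      2 * d * ζ.re - (1 + d ^ 2) * e.re + (1 - d ^ 2) * e.im * I := by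
    apply Complex.ext <;> simp [← ofReal_pow]
    · linear_combination d ^ 2 * e.re * hζ' - d * ζ.re * he'
    · linear_combination d ^ 2 * e.im * hζ' - d * ζ.im * he'
  rw [div_eq_mul_inv, inv_def, ← mul_assoc, hconj, mul_comm]

lemma cot_angle_blaschke_chords (hd : |d| < 1) (hζ : ‖ζ‖ = 1) (he : ‖e‖ = 1)
    (he_im : 0 < e.im) :
    Real.cot (angle (blaschke (d : ℂ) (ζ * e⁻¹) - blaschke (d : ℂ) ζ)
      (blaschke (d : ℂ) (ζ * e) - blaschke (d : ℂ) ζ)) =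
      (2 * d * ζ.re - (1 + d ^ 2) * e.re) / ((1 - d ^ 2) * e.im) := by
  have hd₂ : 0 < 1 - d ^ 2 := by nlinarith [abs_lt.1 hd, sq_abs d]
  have hnormSq : 0 < (normSq (d * ζ - e))⁻¹ :=
    inv_pos.2 (normSq_pos.2 (sub_ne_zero.2 (ofReal_mul_ne_of_norm_eq_one hd he hζ)))
  rw [angle_blaschke_chords hd hζ he (fun h ↦ by simp [h] at he_im),
    one_sub_mul_div_sub_eq_ofReal_mul hζ he,
    cot_angle_ofReal_mul_one hnormSq (by simpa [← ofReal_pow] using mul_pos hd₂ he_im)]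
  simp [← ofReal_pow]

end UnitCircle

end Complex

/-- The cotangent of the interior angle `θ_k` of the harmonic `N`-gon at `w_k` is
`cot(θ_k) = −2d·cos(2αk + t)/((d² − 1)·sin(2α)) + ρ·cot(2α)`, where
`ρ = (1 + d²)/(d² − 1)`. -/
theorem cot_interior_angle (N : ℕ) (hN : 3 ≤ N) (d t : ℝ) (hd : |d| < 1)
    (z w : ℤ → ℂ) (θ : ℤ → ℝ)
    (hz : ∀ k : ℤ, z k = Complex.exp (Complex.I *
      ((2 * (Real.pi / N) * (k : ℝ) + t : ℝ) : ℂ)))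
    (hw : ∀ k : ℤ, w k = ((d : ℂ) * (starRingEnd ℂ) (z k) - 1) /
      ((starRingEnd ℂ) (z k) - (d : ℂ)))
    (hθ : ∀ k : ℤ, θ k = EuclideanGeometry.angle (w (k - 1)) (w k) (w (k + 1)))
    (k : ℤ) :
    Real.cos (θ k) / Real.sin (θ k) =
      (-2 * d * Real.cos (2 * (Real.pi / N) * (k : ℝ) + t)) /
        ((d ^ 2 - 1) * Real.sin (2 * (Real.pi / N))) +
      ((1 + d ^ 2) / (d ^ 2 - 1)) *
        (Real.cos (2 * (Real.pi / N)) / Real.sin (2 * (Real.pi / N))) := by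
  set β := 2 * (π / N)
  set e := exp (β * I)
  have hz' : ∀ j : ℤ, z j = exp (((β * j + t : ℝ) : ℂ) * I) := fun j ↦ by
    rw [hz, mul_comm]
  have hzu : ∀ j, ‖z j‖ = 1 := fun j ↦ by rw [hz']; exact norm_exp_ofReal_mul_I _
  have hprev : z (k - 1) = z k * e⁻¹ := by
    rw [hz', hz', ← Complex.exp_neg, ← Complex.exp_add]; push_cast; ring_nf
  have hnext : z (k + 1) = z k * e := by
    rw [hz', hz', ← Complex.exp_add]; push_cast; ring_nf
  have hN' : (3 : ℝ) ≤ N := by exact_mod_cast hN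
  have hsin : 0 < Real.sin β := Real.sin_pos_of_pos_of_lt_pi (by positivity) (by
    rw [show β = π * (2 / N) by ring]
    exact mul_lt_of_lt_one_right pi_pos ((div_lt_one (by positivity)).2 (by linarith)))
  have hw' : ∀ j, w j = blaschke (d : ℂ) (z j) := fun j ↦ by
    rw [hw, div_conj_sub_eq_blaschke (hzu j)]
  rw [← Real.cot_eq_cos_div_sin, hθ, EuclideanGeometry.angle, vsub_eq_sub, vsub_eq_sub,
    hw', hw', hw', hprev, hnext, cot_angle_blaschke_chords hd (hzu k) (norm_exp_ofReal_mul_I β)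
    (by rwa [exp_ofReal_mul_I_im]), hz' k, exp_ofReal_mul_I_re, exp_ofReal_mul_I_re,
    exp_ofReal_mul_I_im]
  have hd₂ : 0 < 1 - d ^ 2 := by nlinarith [abs_lt.1 hd, sq_abs d]
  rw [show d ^ 2 - 1 = -(1 - d ^ 2) by ring]
  field_simp
  ring
end

section
/- The sum over k = 1, …, N of cot(θ_k) equals N·ρ·cot(2α); in particular it does not depend on t. -/
/-!
On the unit circle, `z ↦ w` is the Möbius involution `y ↦ (d y - 1) / (y - d)` applied to
`conj z`, so ratios of differences of the `w`'s are cross-ratios of the `conj z`'s. With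
`q = exp (2 i α)` this makes the ratio of the two edge vectors at `w k` equal to
`(d q - conj z_k) / (conj z_k q - d)`, and the cotangent of the angle, which is `re / |im|` of that
ratio, comes out as `(2 d cos φ_k - (1 + d²) cos 2α) / ((1 - d²) sin 2α)` with `z_k = exp (i φ_k)`.
Summing over a period, the `cos φ_k` terms cancel since the `z_k` are rotated `N`-th roots of unity.
-/

open Real Finset ComplexConjugate

theorem Complex.cos_abs_arg_div_sin_abs_arg (x : ℂ) :
    Real.cos |arg x| / Real.sin |arg x| = x.re / |x.im| := by
  rcases eq_or_ne x 0 with rfl | hx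
  · simp
  have hsin : Real.sin |arg x| = |Real.sin (arg x)| := by
    rcases le_or_gt 0 (arg x) with h | h
    · rw [abs_of_nonneg h, abs_of_nonneg (sin_nonneg_of_nonneg_of_le_pi h (arg_le_pi x))]
    · rw [abs_of_neg h, Real.sin_neg, abs_of_nonpos]
      exact sin_nonpos_of_nonpos_of_neg_pi_le h.le (neg_pi_lt_arg x).le
  rw [Real.cos_abs, hsin, cos_arg hx, sin_arg, abs_div, abs_norm,
    div_div_div_cancel_right₀ (norm_ne_zero_iff.mpr hx)]

open InnerProductGeometry in
theorem Complex.cos_angle_div_sin_angle (u v : ℂ) :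
    Real.cos (angle u v) / Real.sin (angle u v) = (u / v).re / |(u / v).im| := by
  rcases eq_or_ne u 0 with rfl | hu
  · simp
  rcases eq_or_ne v 0 with rfl | hv
  · simp
  rw [angle_eq_abs_arg hu hv, cos_abs_arg_div_sin_abs_arg]

theorem Complex.re_div_abs_im_div (x y : ℂ) :
    (x / y).re / |(x / y).im| = (x * conj y).re / |(x * conj y).im| := by
  rcases eq_or_ne y 0 with rfl | hy
  · simp
  have hn : 0 < Complex.normSq y := Complex.normSq_pos.mpr hy
  rw [Complex.div_re, Complex.div_im, ← add_div, ← sub_div, abs_div, abs_of_pos hn,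
    div_div_div_cancel_right₀ hn.ne']
  simp only [Complex.mul_re, Complex.mul_im, Complex.conj_re, Complex.conj_im]
  ring

theorem mobius_sub_div_mobius_sub {K : Type*} [Field K] {d a b c : K} (hd : d ^ 2 ≠ 1)
    (ha : a ≠ d) (hb : b ≠ d) (hc : c ≠ d) :
    ((d * a - 1) / (a - d) - (d * b - 1) / (b - d)) /
        ((d * c - 1) / (c - d) - (d * b - 1) / (b - d)) =
      (a - b) * (c - d) / ((c - b) * (a - d)) := by
  have ha' : a - d ≠ 0 := sub_ne_zero.mpr ha
  have hb' : b - d ≠ 0 := sub_ne_zero.mpr hb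
  have hc' : c - d ≠ 0 := sub_ne_zero.mpr hc
  have key : ∀ x, x - d ≠ 0 → (d * x - 1) / (x - d) - (d * b - 1) / (b - d) =
      (1 - d ^ 2) * (x - b) / ((x - d) * (b - d)) := by
    intro x hx
    rw [div_sub_div _ _ hx hb']
    ring
  rw [key a ha', key c hc']
  rcases eq_or_ne c b with rfl | hcb
  · simp
  field_simp

/-- For `‖z‖ = 1`, the second intersection with the unit circle of the line through `d`
and `z`. -/
noncomputable def chordEnd (d : ℝ) (z : ℂ) : ℂ := (d * conj z - 1) / (conj z - d)

theorem Complex.ne_ofReal_of_norm_eq_one {z : ℂ} {d : ℝ} (hd : |d| < 1) (hz : ‖z‖ = 1) :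
    z ≠ d := by
  rintro rfl
  rw [Complex.norm_real, Real.norm_eq_abs] at hz
  exact hd.ne hz

theorem chordEnd_sub_div_chordEnd_sub {d : ℝ} (hd : |d| < 1) {z q : ℂ} (hz : ‖z‖ = 1)
    (hq : ‖q‖ = 1) (hq1 : q ≠ 1) :
    (chordEnd d (z * q⁻¹) - chordEnd d z) / (chordEnd d (z * q) - chordEnd d z) =
      (d * q - conj z) / (conj z * q - d) := by
  have hq0 : q ≠ 0 := norm_ne_zero_iff.mp (by rw [hq]; exact one_ne_zero)
  have hz0 : conj z ≠ 0 := by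
    simpa using norm_ne_zero_iff.mp (by rw [hz]; exact one_ne_zero)
  have hd2 : (d : ℂ) ^ 2 ≠ 1 := by
    rw [← Complex.ofReal_pow, ← Complex.ofReal_one, Ne, Complex.ofReal_inj]
    nlinarith [abs_nonneg d, sq_abs d]
  have hne : ∀ x : ℂ, ‖x‖ = 1 → x ≠ d := fun _ => Complex.ne_ofReal_of_norm_eq_one hd
  simp only [chordEnd, map_mul, map_inv₀, ← Complex.inv_eq_conj hq, inv_inv]
  rw [mobius_sub_div_mobius_sub hd2 (hne _ (by simp [hz, hq])) (hne _ (by simpa using hz))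
    (hne _ (by simp [hz, hq]))]
  field_simp
  ring

open EuclideanGeometry in
theorem cot_angle_chordEnd {d : ℝ} (hd : |d| < 1) {z q : ℂ} (hz : ‖z‖ = 1) (hq : ‖q‖ = 1)
    (hq_im : 0 < q.im) :
    Real.cos (∠ (chordEnd d (z * q⁻¹)) (chordEnd d z) (chordEnd d (z * q))) /
        Real.sin (∠ (chordEnd d (z * q⁻¹)) (chordEnd d z) (chordEnd d (z * q))) =
      (2 * d * z.re - (1 + d ^ 2) * q.re) / ((1 - d ^ 2) * q.im) := by
  have hq1 : q ≠ 1 := by rintro rfl; simp at hq_im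
  have hz2 : z.re * z.re + z.im * z.im = 1 := by
    rw [← Complex.normSq_apply, Complex.normSq_eq_norm_sq, hz, one_pow]
  have hq2 : q.re * q.re + q.im * q.im = 1 := by
    rw [← Complex.normSq_apply, Complex.normSq_eq_norm_sq, hq, one_pow]
  have hd2 : 0 < 1 - d ^ 2 := by nlinarith [abs_nonneg d, sq_abs d]
  have hre : ((d * q - conj z) * conj (conj z * q - d)).re =
      2 * d * z.re - (1 + d ^ 2) * q.re := by
    simp only [Complex.mul_re, Complex.mul_im, Complex.sub_re, Complex.sub_im, Complex.conj_re,
      Complex.conj_im, Complex.ofReal_re, Complex.ofReal_im, map_sub, map_mul,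
      Complex.conj_conj, Complex.conj_ofReal]
    linear_combination d * z.re * hq2 - q.re * hz2
  have him : ((d * q - conj z) * conj (conj z * q - d)).im = (1 - d ^ 2) * q.im := by
    simp only [Complex.mul_re, Complex.mul_im, Complex.sub_re, Complex.sub_im, Complex.conj_re,
      Complex.conj_im, Complex.ofReal_re, Complex.ofReal_im, map_sub, map_mul,
      Complex.conj_conj, Complex.conj_ofReal]
    linear_combination q.im * hz2 + d * z.im * hq2
  rw [EuclideanGeometry.angle, vsub_eq_sub, vsub_eq_sub, Complex.cos_angle_div_sin_angle,
    chordEnd_sub_div_chordEnd_sub hd hz hq hq1, Complex.re_div_abs_im_div, hre, him,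
    abs_of_pos (mul_pos hd2 hq_im)]

theorem sum_Icc_cos_two_pi_div_mul_add {N : ℕ} (hN : 2 ≤ N) (t : ℝ) :
    ∑ k ∈ Icc (1 : ℤ) N, Real.cos (2 * (π / N) * k + t) = 0 := by
  set ζ := Complex.exp (2 * π * Complex.I / N)
  have hterm : ∀ i : ℕ, Real.cos (2 * (π / N) * ((1 + i : ℤ) : ℝ) + t) =
      (Complex.exp ((2 * (π / N) + t : ℝ) * Complex.I) * ζ ^ i).re := by
    intro i
    rw [← Complex.exp_nat_mul, ← Complex.exp_add, ← Complex.exp_ofReal_mul_I_re]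
    congr 2
    push_cast
    field_simp
    ring
  rw [Int.Icc_eq_finset_map, sum_map]
  simp only [Function.Embedding.trans_apply, Nat.castEmbedding_apply, addLeftEmbedding_apply,
    add_sub_cancel_right, Int.toNat_natCast, hterm, ← Complex.re_sum, ← mul_sum]
  rw [(Complex.isPrimitiveRoot_exp N (by omega)).geom_sum_eq_zero (by omega), mul_zero,
    Complex.zero_re]

theorem Real.sin_two_mul_pi_div_pos {N : ℕ} (hN : 3 ≤ N) : 0 < sin (2 * (π / N)) := by
  have hN' : (3 : ℝ) ≤ N := by exact_mod_cast hN
  apply sin_pos_of_pos_of_lt_pi (by positivity)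
  rw [mul_div_assoc', div_lt_iff₀ (by positivity)]
  nlinarith [pi_pos]

/-- Over the Poncelet family of harmonic polygons, the sum of the cotangents of
the interior angles is invariant and given by `N·ρ·cot(2α)`, where
`ρ = (1 + d²)/(d² − 1)`; in particular it does not depend on `t`. -/
theorem sum_cot_interior_angles (N : ℕ) (hN : 3 ≤ N) (d t : ℝ) (hd : |d| < 1)
    (z w : ℤ → ℂ) (θ : ℤ → ℝ)
    (hz : ∀ k : ℤ, z k = Complex.exp (Complex.I *
      ((2 * (Real.pi / N) * (k : ℝ) + t : ℝ) : ℂ)))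
    (hw : ∀ k : ℤ, w k = ((d : ℂ) * (starRingEnd ℂ) (z k) - 1) /
      ((starRingEnd ℂ) (z k) - (d : ℂ)))
    (hθ : ∀ k : ℤ, θ k = EuclideanGeometry.angle (w (k - 1)) (w k) (w (k + 1))) :
    ∑ k ∈ Finset.Icc (1 : ℤ) N, Real.cos (θ k) / Real.sin (θ k) =
      (N : ℝ) * ((1 + d ^ 2) / (d ^ 2 - 1)) *
        (Real.cos (2 * (Real.pi / N)) / Real.sin (2 * (Real.pi / N))) := by
  have hsin := Real.sin_two_mul_pi_div_pos hN
  have hd2 : 1 - d ^ 2 ≠ 0 := by nlinarith [abs_nonneg d, sq_abs d]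
  set q := Complex.exp ((2 * (π / N) : ℝ) * Complex.I)
  have hz_mul : ∀ k : ℤ, z (k + 1) = z k * q := by
    intro k
    rw [hz, hz, ← Complex.exp_add]
    push_cast
    congr 1
    ring
  have hz_norm : ∀ k, ‖z k‖ = 1 := fun k => by
    rw [hz, mul_comm]; exact Complex.norm_exp_ofReal_mul_I _
  have hz_re : ∀ k : ℤ, (z k).re = Real.cos (2 * (π / N) * k + t) := fun k => by
    rw [hz, mul_comm, Complex.exp_ofReal_mul_I_re]
  have hcot : ∀ k, Real.cos (θ k) / Real.sin (θ k) =
      (2 * d * Real.cos (2 * (π / N) * k + t) - (1 + d ^ 2) * Real.cos (2 * (π / N))) /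
        ((1 - d ^ 2) * Real.sin (2 * (π / N))) := by
    intro k
    have hz_pred : z (k - 1) = z k * q⁻¹ := by
      rw [eq_mul_inv_iff_mul_eq₀ (Complex.exp_ne_zero _), ← hz_mul, sub_add_cancel]
    have hq_im : q.im = Real.sin (2 * (π / N)) := Complex.exp_ofReal_mul_I_im _
    simp only [hθ, show ∀ j, w j = chordEnd d (z j) from hw, hz_pred, hz_mul]
    rw [cot_angle_chordEnd hd (hz_norm k)
      (Complex.norm_exp_ofReal_mul_I _) (hq_im ▸ hsin), hz_re, hq_im,
      Complex.exp_ofReal_mul_I_re]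
  rw [sum_congr rfl fun k _ => hcot k, ← sum_div, sum_sub_distrib, ← mul_sum,
    sum_Icc_cos_two_pi_div_mul_add (by omega), sum_const, Int.card_Icc, add_sub_cancel_right,
    Int.toNat_natCast, nsmul_eq_mul, mul_zero, zero_sub]
  have hd2' : d ^ 2 - 1 ≠ 0 := fun h => hd2 (by linarith)
  field_simp
  ring
end

section
/- For every integer m with 1 ≤ m ≤ N − 1, the power sum over k = 1, …, N of cot^m(θ_k) does not depend on t: writing θ_k(t) for the interior angle at w_k when the parameter is t, for all real t and t′ one has Σ_k cot^m(θ_k(t)) = Σ_k cot^m(θ_k(t′)). -/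
/-!
The Möbius involution `z ↦ (d - z) / (1 - d z)` of the unit disc maps the vertex `z_k` of the
regular polygon to `w_k`. Writing `s = z_k` and `c = e^{2iα}`, a direct computation of
`conj (w_{k-1} - w_k) * (w_{k+1} - w_k)` shows that the angle at `w_k` satisfies
`cot θ_k = a + b cos (2αk + t)` with `a, b` independent of `k` and `t`. Hence `cot^m θ_k` is a
polynomial of degree `m < N` in `cos (2αk + t)`, i.e. a trigonometric polynomial of degree `m`
in `2αk + t`; summing over `k` kills every frequency `r` with `0 < |r| < N`, and the constant
term does not depend on `t`.
-/

open Real Finset Polynomial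
open Complex (I)
open scoped Complex ComplexConjugate

theorem sum_zpow_Icc_eq_zero {ω : ℂ} {N : ℕ} (hωN : ω ^ N = 1) (hω : ω ≠ 1) :
    ∑ k ∈ Icc (1 : ℤ) N, ω ^ k = 0 := by
  rcases N.eq_zero_or_pos with rfl | hN
  · simp
  have hω0 : ω ≠ 0 := by rintro rfl; simp [hN.ne'] at hωN
  rw [Int.Icc_eq_finset_map, sum_map]
  simp only [Function.Embedding.trans_apply, Nat.castEmbedding_apply, addLeftEmbedding_apply,
    zpow_add₀ hω0, zpow_natCast, zpow_one, ← mul_sum]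
  simp [geom_sum_eq hω, hωN]

theorem sum_exp_int_mul_eq_zero {N : ℕ} (hN : N ≠ 0) {r : ℤ} (hr : ¬ (N : ℤ) ∣ r) (t : ℝ) :
    ∑ k ∈ Icc (1 : ℤ) N, cexp (r * ((2 * (π / N) * k + t : ℝ) * I)) = 0 := by
  set ζ := cexp (2 * π * I / N)
  have hζ : IsPrimitiveRoot ζ N := Complex.isPrimitiveRoot_exp N hN
  have hterm (k : ℤ) : cexp (r * ((2 * (π / N) * k + t : ℝ) * I)) =
      cexp (r * (t * I)) * (ζ ^ r) ^ k := by
    rw [← zpow_mul, ← Complex.exp_int_mul, ← Complex.exp_add]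
    push_cast
    ring_nf
  have hζN : (ζ ^ r) ^ N = 1 := by
    rw [← zpow_natCast, ← zpow_mul, mul_comm, zpow_mul, zpow_natCast, hζ.pow_eq_one, one_zpow]
  simp only [hterm, ← mul_sum, sum_zpow_Icc_eq_zero hζN (mt (hζ.zpow_eq_one_iff_dvd r).1 hr),
    mul_zero]

theorem sum_exp_int_mul_shift_eq {N : ℕ} (hN : N ≠ 0) {r : ℤ} (hr : r.natAbs < N) (t t' : ℝ) :
    ∑ k ∈ Icc (1 : ℤ) N, cexp (r * ((2 * (π / N) * k + t : ℝ) * I)) =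
      ∑ k ∈ Icc (1 : ℤ) N, cexp (r * ((2 * (π / N) * k + t' : ℝ) * I)) := by
  rcases eq_or_ne r 0 with rfl | hr0
  · simp
  have hdvd : ¬ (N : ℤ) ∣ r := fun h =>
    hr0 (Int.eq_zero_of_dvd_of_natAbs_lt_natAbs h (by simpa using hr))
  rw [sum_exp_int_mul_eq_zero hN hdvd, sum_exp_int_mul_eq_zero hN hdvd]

theorem ofReal_cos_pow_eq_sum_exp (x : ℝ) (j : ℕ) :
    ((cos x ^ j : ℝ) : ℂ) =
      ∑ i ∈ range (j + 1), (j.choose i / 2 ^ j : ℂ) * cexp (((2 * i - j : ℤ) : ℂ) * (x * I)) := by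
  rw [Complex.ofReal_pow, Complex.ofReal_cos, Complex.cos, div_pow, add_pow, sum_div]
  refine sum_congr rfl fun i hi => ?_
  have hij : i ≤ j := Nat.lt_succ_iff.mp (mem_range.mp hi)
  rw [← Complex.exp_nat_mul, ← Complex.exp_nat_mul, ← Complex.exp_add]
  push_cast [hij]
  ring_nf

theorem sum_cos_pow_shift_eq {N : ℕ} (hN : N ≠ 0) {j : ℕ} (hj : j < N) (t t' : ℝ) :
    ∑ k ∈ Icc (1 : ℤ) N, cos (2 * (π / N) * k + t) ^ j =
      ∑ k ∈ Icc (1 : ℤ) N, cos (2 * (π / N) * k + t') ^ j := by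
  apply Complex.ofReal_injective
  simp only [Complex.ofReal_sum, ofReal_cos_pow_eq_sum_exp]
  rw [sum_comm, sum_comm (s := Icc _ _)]
  refine sum_congr rfl fun i hi => ?_
  have hij : i ≤ j := Nat.lt_succ_iff.mp (mem_range.mp hi)
  rw [← mul_sum, ← mul_sum, sum_exp_int_mul_shift_eq hN (by omega)]

theorem sum_eval_cos_shift_eq {N : ℕ} (hN : N ≠ 0) {p : ℝ[X]} (hp : p.natDegree < N) (t t' : ℝ) :
    ∑ k ∈ Icc (1 : ℤ) N, p.eval (cos (2 * (π / N) * k + t)) =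
      ∑ k ∈ Icc (1 : ℤ) N, p.eval (cos (2 * (π / N) * k + t')) := by
  simp only [eval_eq_sum_range]
  rw [sum_comm, sum_comm (s := Icc _ _)]
  refine sum_congr rfl fun i hi => ?_
  rw [← mul_sum, ← mul_sum, sum_cos_pow_shift_eq hN (by grind)]

theorem cos_angle_div_sin_angle (x y : ℂ) :
    cos (InnerProductGeometry.angle x y) / sin (InnerProductGeometry.angle x y) =
      (conj x * y).re / |(conj x * y).im| := by
  set P := conj x * y
  have hnorm : ‖x‖ * ‖y‖ = ‖P‖ := by rw [norm_mul, Complex.norm_conj]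
  have hinner : inner ℝ x y = P.re := by rw [Complex.inner, mul_comm]
  have hcos : cos (InnerProductGeometry.angle x y) = P.re / ‖P‖ := by
    rw [InnerProductGeometry.cos_angle, hinner, hnorm]
  rcases eq_or_ne P 0 with hP | hP
  · simp [hcos, hP]
  have hsin : sin (InnerProductGeometry.angle x y) * ‖P‖ = |P.im| := by
    rw [← hnorm, InnerProductGeometry.sin_angle_mul_norm_mul_norm, real_inner_self_eq_norm_sq,
      real_inner_self_eq_norm_sq, hinner, ← mul_pow, hnorm, ← Real.sqrt_sq_eq_abs,
      Complex.sq_norm, Complex.normSq_apply]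
    ring_nf
  rw [hcos, ← hsin, div_mul_eq_div_div_swap]

theorem re_div_abs_im_of_mul_eq_neg {p : ℂ} {x y κ : ℝ} (h : p * (x - y * I) = κ) (hκ : κ < 0)
    (hy : 0 < y) : p.re / |p.im| = -x / y := by
  have hre := congrArg Complex.re h
  have him := congrArg Complex.im h
  simp only [Complex.mul_re, Complex.mul_im, Complex.sub_re, Complex.sub_im, Complex.ofReal_re,
    Complex.ofReal_im, Complex.I_re, Complex.I_im] at hre him
  have hnormSq : κ * y = p.im * (x ^ 2 + y ^ 2) := by linear_combination -y * hre - x * him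
  have hneg : p.im < 0 := by nlinarith [sq_nonneg x]
  rw [abs_of_neg hneg, div_eq_div_iff (neg_ne_zero.mpr hneg.ne) hy.ne']
  linarith

noncomputable def mobiusInvolution (d : ℝ) (z : ℂ) : ℂ := (d - z) / (1 - d * z)

theorem sub_ofReal_mul_ne_zero {d : ℝ} (hd : |d| < 1) {z w : ℂ} (hz : ‖z‖ = 1) (hw : ‖w‖ ≤ 1) :
    z - d * w ≠ 0 := by
  intro h
  have hnorm : ‖z‖ ≤ |d| := by
    rw [sub_eq_zero.mp h, norm_mul, Complex.norm_real, Real.norm_eq_abs]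
    exact mul_le_of_le_one_right (abs_nonneg d) hw
  linarith

theorem conj_mobiusInvolution (d : ℝ) (z : ℂ) :
    conj (mobiusInvolution d z) = mobiusInvolution d (conj z) := by
  simp [mobiusInvolution]

theorem mobiusInvolution_sub {d : ℝ} {z z' : ℂ} (hz : 1 - (d : ℂ) * z ≠ 0)
    (hz' : 1 - (d : ℂ) * z' ≠ 0) :
    mobiusInvolution d z - mobiusInvolution d z' =
      (1 - (d : ℂ) ^ 2) * (z' - z) / ((1 - d * z) * (1 - d * z')) := by
  rw [mobiusInvolution, mobiusInvolution, div_sub_div _ _ hz hz']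
  ring

theorem mobiusInvolution_eq_div_conj (d : ℝ) {z : ℂ} (hz : ‖z‖ = 1) :
    mobiusInvolution d z = (d * conj z - 1) / (conj z - d) := by
  have hz0 : z ≠ 0 := by rintro rfl; simp at hz
  rw [← Complex.inv_eq_conj hz, mobiusInvolution]
  field_simp

/-- The extra factor is `|1 - d s|²` times `c⁻¹ (1 - d s⁻¹ c) (1 - d s c)`; for `s = e^{iτ}`,
`c = e^{iβ}` it equals `|1 - d s|² · conj ((1 + d²) cos β - 2 d cos τ + i (1 - d²) sin β)`. -/
theorem conj_sub_mul_sub_mobiusInvolution {d : ℝ} (hd : |d| < 1) {s c : ℂ} (hs : ‖s‖ = 1)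
    (hc : ‖c‖ = 1) :
    conj (mobiusInvolution d (s * c⁻¹) - mobiusInvolution d s) *
        (mobiusInvolution d (s * c) - mobiusInvolution d s) *
        ((1 - d * s) * (1 - d * s⁻¹) * (c⁻¹ + d ^ 2 * c - d * (s + s⁻¹))) =
      (1 - (d : ℂ) ^ 2) ^ 2 * (c + c⁻¹ - 2) := by
  have hs0 : s ≠ 0 := by rintro rfl; simp at hs
  have hc0 : c ≠ 0 := by rintro rfl; simp at hc
  have hne {z : ℂ} (hz : ‖z‖ = 1) : 1 - (d : ℂ) * z ≠ 0 :=
    sub_ofReal_mul_ne_zero hd norm_one hz.le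
  have hunit {a b : ℂ} (ha : ‖a‖ = 1) (hb : ‖b‖ = 1) : ‖a * b‖ = 1 := by simp [ha, hb]
  have hinv {a : ℂ} (ha : ‖a‖ = 1) : ‖a⁻¹‖ = 1 := by simp [ha]
  rw [map_sub, conj_mobiusInvolution, conj_mobiusInvolution, map_mul, map_inv₀,
    ← Complex.inv_eq_conj hs, ← Complex.inv_eq_conj hc, inv_inv,
    mobiusInvolution_sub (hne (hunit (hinv hs) hc)) (hne (hinv hs)),
    mobiusInvolution_sub (hne (hunit hs hc)) (hne hs)]
  have h1 : s - d * c ≠ 0 := sub_ofReal_mul_ne_zero hd hs hc.le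
  have h2 : s - d ≠ 0 := by simpa using sub_ofReal_mul_ne_zero hd hs norm_one.le
  have h3 : 1 - d * s * c ≠ 0 := by rw [mul_assoc]; exact hne (hunit hs hc)
  have h4 : 1 - (d : ℂ) * s ≠ 0 := hne hs
  field_simp
  ring

theorem cos_angle_div_sin_angle_mobiusInvolution {d : ℝ} (hd : |d| < 1) {β : ℝ} (hβ : 0 < sin β)
    (τ : ℝ) :
    cos (EuclideanGeometry.angle (mobiusInvolution d (cexp (↑(τ - β) * I)))
        (mobiusInvolution d (cexp (τ * I))) (mobiusInvolution d (cexp (↑(τ + β) * I)))) /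
      sin (EuclideanGeometry.angle (mobiusInvolution d (cexp (↑(τ - β) * I)))
        (mobiusInvolution d (cexp (τ * I))) (mobiusInvolution d (cexp (↑(τ + β) * I)))) =
      (2 * d * cos τ - (1 + d ^ 2) * cos β) / ((1 - d ^ 2) * sin β) := by
  set s := cexp (τ * I)
  set c := cexp (β * I)
  have hs_inv : s⁻¹ = cexp (-τ * I) := by rw [neg_mul, Complex.exp_neg]
  have hc_inv : c⁻¹ = cexp (-β * I) := by rw [neg_mul, Complex.exp_neg]
  have hsub : cexp (↑(τ - β) * I) = s * c⁻¹ := by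
    rw [hc_inv, ← Complex.exp_add]; push_cast; ring_nf
  have hadd : cexp (↑(τ + β) * I) = s * c := by
    rw [← Complex.exp_add]; push_cast; ring_nf
  set L := 1 + d ^ 2 - 2 * d * cos τ
  have hL : 0 < L := by
    have : d * cos τ ≤ |d| := (le_abs_self _).trans (by
      rw [abs_mul]; exact mul_le_of_le_one_right (abs_nonneg d) (abs_cos_le_one τ))
    nlinarith [sq_abs d, abs_nonneg d]
  have hd2 : 0 < 1 - d ^ 2 := by nlinarith [sq_abs d, abs_nonneg d]
  have hcosβ : cos β < 1 := by nlinarith [sin_sq_add_cos_sq β, cos_le_one β]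
  have key := conj_sub_mul_sub_mobiusInvolution hd (Complex.norm_exp_ofReal_mul_I τ)
    (Complex.norm_exp_ofReal_mul_I β)
  have hLQ : (1 - d * s) * (1 - d * s⁻¹) * (c⁻¹ + d ^ 2 * c - d * (s + s⁻¹)) =
      ((L * ((1 + d ^ 2) * cos β - 2 * d * cos τ) : ℝ) : ℂ) -
        ((L * ((1 - d ^ 2) * sin β) : ℝ) : ℂ) * I := by
    simp only [L]
    push_cast
    rw [Complex.cos, Complex.cos, Complex.sin, ← hs_inv, ← hc_inv]
    have hs0 : s * s⁻¹ = 1 := mul_inv_cancel₀ (Complex.exp_ne_zero _)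
    linear_combination (d ^ 2 * (c⁻¹ + d ^ 2 * c - d * (s + s⁻¹))) * hs0 -
      ((1 - d ^ 2) * (c - c⁻¹) * (1 + d ^ 2 - d * (s + s⁻¹)) / 2) * Complex.I_sq
  have hκ : (1 - (d : ℂ) ^ 2) ^ 2 * (c + c⁻¹ - 2) =
      (((1 - d ^ 2) ^ 2 * (2 * cos β - 2) : ℝ) : ℂ) := by
    push_cast
    rw [Complex.cos, ← hc_inv]
    ring
  rw [EuclideanGeometry.angle, vsub_eq_sub, vsub_eq_sub, cos_angle_div_sin_angle, hsub, hadd,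
    re_div_abs_im_of_mul_eq_neg (by rw [← hLQ, key, hκ])
      (mul_neg_of_pos_of_neg (by positivity) (by linarith)) (by positivity)]
  field_simp
  ring

theorem sum_cot_pow_invariant_general (N : ℕ) (hN : 3 ≤ N) (d : ℝ) (hd : |d| < 1)
    (z w : ℝ → ℤ → ℂ) (θ : ℝ → ℤ → ℝ)
    (hz : ∀ (t : ℝ) (k : ℤ), z t k = Complex.exp (Complex.I *
      ((2 * (Real.pi / N) * (k : ℝ) + t : ℝ) : ℂ)))
    (hw : ∀ (t : ℝ) (k : ℤ), w t k = ((d : ℂ) * (starRingEnd ℂ) (z t k) - 1) /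
      ((starRingEnd ℂ) (z t k) - (d : ℂ)))
    (hθ : ∀ (t : ℝ) (k : ℤ),
      θ t k = EuclideanGeometry.angle (w t (k - 1)) (w t k) (w t (k + 1)))
    (m : ℕ) (hmN : m ≤ N - 1) (t t' : ℝ) :
    ∑ k ∈ Finset.Icc (1 : ℤ) N, (Real.cos (θ t k) / Real.sin (θ t k)) ^ m =
      ∑ k ∈ Finset.Icc (1 : ℤ) N, (Real.cos (θ t' k) / Real.sin (θ t' k)) ^ m := by
  set β := 2 * (π / N)
  have hβ : 0 < sin β := by
    have hN' : (3 : ℝ) ≤ N := by exact_mod_cast hN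
    refine sin_pos_of_pos_of_lt_pi (by positivity) ?_
    calc 2 * (π / N) ≤ 2 * (π / 3) := by gcongr
      _ < π := by linarith [pi_pos]
  have hw' (τ : ℝ) (j : ℤ) : w τ j = mobiusInvolution d (cexp (↑(β * j + τ) * I)) := by
    rw [hw, hz, mul_comm I, mobiusInvolution_eq_div_conj d (Complex.norm_exp_ofReal_mul_I _)]
  have hcot (τ : ℝ) (k : ℤ) : cos (θ τ k) / sin (θ τ k) =
      (C (2 * d / ((1 - d ^ 2) * sin β)) * X +
        C (-(1 + d ^ 2) * cos β / ((1 - d ^ 2) * sin β))).eval (cos (β * k + τ)) := by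
    have hprev : β * ↑(k - 1) + τ = β * k + τ - β := by push_cast; ring
    have hnext : β * ↑(k + 1) + τ = β * k + τ + β := by push_cast; ring
    rw [hθ, hw', hw', hw', hprev, hnext, cos_angle_div_sin_angle_mobiusInvolution hd hβ]
    simp only [eval_add, eval_mul, eval_C, eval_X]
    ring
  simp only [hcot, ← eval_pow]
  exact sum_eval_cos_shift_eq (by omega)
    ((natDegree_pow_le_of_le m natDegree_linear_le).trans_lt (by omega)) t t'

/-- For `1 ≤ m ≤ N − 1`, the sum of the `m`-th powers of the cotangents of the
interior angles of the harmonic `N`-gon does not depend on the Poncelet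
parameter `t`. -/
theorem sum_cot_pow_invariant (N : ℕ) (hN : 3 ≤ N) (d : ℝ) (hd : |d| < 1)
    (z w : ℝ → ℤ → ℂ) (θ : ℝ → ℤ → ℝ)
    (hz : ∀ (t : ℝ) (k : ℤ), z t k = Complex.exp (Complex.I *
      ((2 * (Real.pi / N) * (k : ℝ) + t : ℝ) : ℂ)))
    (hw : ∀ (t : ℝ) (k : ℤ), w t k = ((d : ℂ) * (starRingEnd ℂ) (z t k) - 1) /
      ((starRingEnd ℂ) (z t k) - (d : ℂ)))
    (hθ : ∀ (t : ℝ) (k : ℤ),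
      θ t k = EuclideanGeometry.angle (w t (k - 1)) (w t k) (w t (k + 1)))
    (m : ℕ) (hm1 : 1 ≤ m) (hmN : m ≤ N - 1) (t t' : ℝ) :
    ∑ k ∈ Finset.Icc (1 : ℤ) N, (Real.cos (θ t k) / Real.sin (θ t k)) ^ m =
      ∑ k ∈ Finset.Icc (1 : ℤ) N, (Real.cos (θ t' k) / Real.sin (θ t' k)) ^ m :=
  sum_cot_pow_invariant_general N hN d hd z w θ hz hw hθ m hmN t t'
end

section
/- Let N = 4. Then for every odd positive integer m, the sum over k = 1, …, 4 of cot^m(θ_k) equals 0. -/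
/-!
Write `c_k = conj z_k`, so that `w_k = (d c_k - 1) / (c_k - d)` is the image of `c_k` under a
Möbius map. The cotangent of the undirected angle between two complex vectors `x`, `y` is
`Re q / |Im q|` with `q = x / y`. For the vertex `w_k` the quotient
`q_k = (w_{k-1} - w_k) / (w_{k+1} - w_k)` factors through the Möbius difference formula, and since
`c_{k±1} = ∓ i c_k` it equals `i (i c_k + d) / (i c_k - d)`. As `c_{k+2} = -c_k`, this gives
`q_{k+2} = -q_k⁻¹`, which flips the sign of the cotangent (opposite angles of the cyclic
quadrilateral are supplementary), so the odd powers cancel in pairs.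
-/

open Real Finset Complex ComplexConjugate

theorem cot_angle_eq_re_div_abs_im (x y : ℂ) :
    Real.cot (InnerProductGeometry.angle x y) = (x / y).re / |(x / y).im| := by
  rw [Real.cot_eq_cos_div_sin]
  rcases eq_or_ne x 0 with rfl | hx
  · simp
  rcases eq_or_ne y 0 with rfl | hy
  · simp
  have hq : x / y ≠ 0 := div_ne_zero hx hy
  rw [angle_eq_abs_arg hx hy, Real.cos_abs, ← abs_sin_eq_sin_abs_of_abs_le_pi (abs_arg_le_pi _),
    cos_arg hq, sin_arg, abs_div, abs_norm]
  have : ‖x / y‖ ≠ 0 := norm_ne_zero_iff.mpr hq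
  field_simp

theorem re_div_abs_im_neg_inv (q : ℂ) :
    (-q⁻¹).re / |(-q⁻¹).im| = -(q.re / |q.im|) := by
  rcases eq_or_ne q 0 with rfl | hq
  · simp
  have : 0 < normSq q := normSq_pos.mpr hq
  rw [neg_re, neg_im, inv_re, inv_im, abs_neg, neg_div, abs_div,
    abs_of_pos this, abs_neg]
  field_simp

noncomputable def mobius (d c : ℂ) : ℂ := (d * c - 1) / (c - d)

theorem mobius_sub_mobius (d a b : ℂ) (ha : a ≠ d) (hb : b ≠ d) :
    mobius d a - mobius d b = (1 - d ^ 2) * (a - b) / ((a - d) * (b - d)) := by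
  rw [mobius, mobius, div_sub_div _ _ (sub_ne_zero.mpr ha) (sub_ne_zero.mpr hb)]
  ring

noncomputable def squareVertexRatio (d c : ℂ) : ℂ :=
  (mobius d (I * c) - mobius d c) / (mobius d (-I * c) - mobius d c)

theorem mul_ne_of_norm_lt_one {u c d : ℂ} (hu : ‖u‖ = 1) (hc : ‖c‖ = 1) (hd : ‖d‖ < 1) :
    u * c ≠ d := by
  rintro rfl
  rw [norm_mul, hu, hc, one_mul] at hd
  exact hd.false

theorem squareVertexRatio_eq (d c : ℂ) (hd : ‖d‖ < 1) (hc : ‖c‖ = 1) :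
    squareVertexRatio d c = I * (I * c + d) / (I * c - d) := by
  have hc_ne : c ≠ d := by simpa using mul_ne_of_norm_lt_one (u := 1) (by simp) hc hd
  have hIc_ne := mul_ne_of_norm_lt_one (u := I) (by simp) hc hd
  have hmIc_ne := mul_ne_of_norm_lt_one (u := -I) (by simp) hc hd
  have hc0 : c ≠ 0 := by rintro rfl; simp at hc
  have hd_sq : 1 - d ^ 2 ≠ 0 := by
    intro h
    have : ‖d‖ ^ 2 = 1 := by rw [← norm_pow, ← sub_eq_zero.mp h]; simp
    nlinarith [norm_nonneg d]
  rw [squareVertexRatio, mobius_sub_mobius _ _ _ hIc_ne hc_ne,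
    mobius_sub_mobius _ _ _ hmIc_ne hc_ne]
  field_simp [sub_ne_zero.mpr hIc_ne, sub_ne_zero.mpr hmIc_ne, sub_ne_zero.mpr hc_ne]
  rw [div_eq_iff (by simp [Complex.ext_iff])]
  linear_combination (I * c + d) * I_sq

theorem squareVertexRatio_neg (d c : ℂ) (hd : ‖d‖ < 1) (hc : ‖c‖ = 1) :
    squareVertexRatio d (-c) = -(squareVertexRatio d c)⁻¹ := by
  have hIc_ne := mul_ne_of_norm_lt_one (u := I) (by simp) hc hd
  have hmIc_ne : I * c + d ≠ 0 := fun h ↦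
    mul_ne_of_norm_lt_one (u := -I) (by simp) hc hd (by linear_combination -h)
  rw [squareVertexRatio_eq d c hd hc, squareVertexRatio_eq d (-c) hd (by rwa [norm_neg])]
  field_simp [sub_ne_zero.mpr hIc_ne]
  rw [div_eq_iff (by rw [← neg_add']; exact neg_ne_zero.mpr hmIc_ne)]
  linear_combination (d - I * c) * (I * c + d) * I_sq

theorem sum_cot_odd_pow_quadrilateral_general (d t : ℝ) (hd : |d| < 1)
    (z w : ℤ → ℂ) (θ : ℤ → ℝ)
    (hz : ∀ k : ℤ, z k = Complex.exp (Complex.I *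
      ((2 * (Real.pi / 4) * (k : ℝ) + t : ℝ) : ℂ)))
    (hw : ∀ k : ℤ, w k = ((d : ℂ) * (starRingEnd ℂ) (z k) - 1) /
      ((starRingEnd ℂ) (z k) - (d : ℂ)))
    (hθ : ∀ k : ℤ, θ k = EuclideanGeometry.angle (w (k - 1)) (w k) (w (k + 1)))
    (m : ℕ) (hodd : Odd m) :
    ∑ k ∈ Finset.Icc (1 : ℤ) 4, (Real.cos (θ k) / Real.sin (θ k)) ^ m = 0 := by
  set c : ℤ → ℂ := fun k ↦ conj (z k) with hc_def
  have hd' : ‖(d : ℂ)‖ < 1 := by rwa [norm_real, Real.norm_eq_abs]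
  have hc : ∀ k, ‖c k‖ = 1 := fun k ↦ by
    rw [hc_def, norm_conj, hz, mul_comm, norm_exp_ofReal_mul_I]
  have hc_succ : ∀ k, c (k + 1) = -I * c k := fun k ↦ by
    have : z (k + 1) = I * z k :=
      calc z (k + 1) = cexp (π / 2 * I) * z k := by
            rw [hz, hz, ← Complex.exp_add]; congr 1; push_cast; ring
        _ = I * z k := by rw [exp_pi_div_two_mul_I]
    simp [hc_def, this]
  have hw' : ∀ k, w k = mobius d (c k) := hw
  have hcot : ∀ k, Real.cot (θ k)
      = (squareVertexRatio d (c k)).re / |(squareVertexRatio d (c k)).im| := fun k ↦ by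
    have hc_pred : c (k - 1) = I * c k := by
      have := hc_succ (k - 1)
      rw [sub_add_cancel] at this
      linear_combination (-I) * this + c (k - 1) * I_sq
    rw [hθ, hw', hw', hw', hc_pred, hc_succ]
    exact cot_angle_eq_re_div_abs_im _ _
  have hopp : ∀ k, Real.cot (θ (k + 2)) = -Real.cot (θ k) := fun k ↦ by
    have : c (k + 2) = -c k := by
      rw [show k + 2 = k + 1 + 1 by ring, hc_succ, hc_succ]
      linear_combination c k * I_sq
    rw [hcot, hcot, this, squareVertexRatio_neg _ _ hd' (hc k), re_div_abs_im_neg_inv]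
  simp_rw [← Real.cot_eq_cos_div_sin]
  rw [show Icc (1 : ℤ) 4 = {1, 2, 3, 4} from rfl, sum_insert (by decide), sum_insert (by decide),
    sum_insert (by decide), sum_singleton, show (3 : ℤ) = 1 + 2 from rfl,
    show (4 : ℤ) = 2 + 2 from rfl, hopp, hopp, hodd.neg_pow, hodd.neg_pow]
  ring

/-- For `N = 4` and every odd positive integer `m`, the sum over `k = 1, …, 4`
of `cot^m(θ_k)` vanishes. -/
theorem sum_cot_odd_pow_quadrilateral (d t : ℝ) (hd : |d| < 1)
    (z w : ℤ → ℂ) (θ : ℤ → ℝ)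
    (hz : ∀ k : ℤ, z k = Complex.exp (Complex.I *
      ((2 * (Real.pi / 4) * (k : ℝ) + t : ℝ) : ℂ)))
    (hw : ∀ k : ℤ, w k = ((d : ℂ) * (starRingEnd ℂ) (z k) - 1) /
      ((starRingEnd ℂ) (z k) - (d : ℂ)))
    (hθ : ∀ k : ℤ, θ k = EuclideanGeometry.angle (w (k - 1)) (w k) (w (k + 1)))
    (m : ℕ) (hm : 1 ≤ m) (hodd : Odd m) :
    ∑ k ∈ Finset.Icc (1 : ℤ) 4, (Real.cos (θ k) / Real.sin (θ k)) ^ m = 0 :=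
  sum_cot_odd_pow_quadrilateral_general d t hd z w θ hz hw hθ m hodd
end

section
/- Let K = x0³/(x0² + 1) (a real point, the symmedian point of the harmonic family), and set a_h = (x0² + 1)²/|1 − x0²|, b_h = x0² + 1, x_h = x0·(3x0⁴ + 3x0² + 2)/(x0⁴ − 1), a_H = a_h/cos α, b_H = b_h/cos α, x_H = x_h. For each index k, if h_k is the pole of the line through w_k and w_{k+1} with respect to the unit circle centered at K, then h_k lies on the ellipse E_H, i.e., (Re(h_k) − x_H)²/a_H² + (Im(h_k))²/b_H² = 1. -/
/-!
For `z` on the unit circle, multiplying the pole condition `⟪w - K, h - K⟫ = 1` for the inverse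
`w` of `z` by `|z - x0|² = 1 - 2 x0 Re z + x0²` makes it linear in `z`; the choice of `K` is exactly
what makes the constant term independent of `h`. So `z_k` and `z_{k+1}` both lie on the line
`⟪z, v⟫ = 1 + x0²` with `v = ((1 - x0²)/(1 + x0²) (Re h - x_H), Im h)`. A chord of the unit circle
subtending the angle `2α` is at distance `cos α` from the centre, hence `|v| cos α = 1 + x0²`,
which is the equation of `E_H`.
-/

open Real ComplexConjugate

theorem sq_add_sq_mul_cos_sq_of_chord {A B r θ α : ℝ} (hα : sin α ≠ 0)
    (h₁ : cos θ * A + sin θ * B = r)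
    (h₂ : cos (θ + 2 * α) * A + sin (θ + 2 * α) * B = r) :
    (A ^ 2 + B ^ 2) * cos α ^ 2 = r ^ 2 := by
  obtain ⟨φ, rfl⟩ : ∃ φ, θ = φ - α := ⟨θ + α, by ring⟩
  rw [show φ - α + 2 * α = φ + α by ring] at h₂
  rw [cos_sub, sin_sub] at h₁
  rw [cos_add, sin_add] at h₂
  have hP : (A * cos φ + B * sin φ) * cos α = r := by linear_combination (h₁ + h₂) / 2
  have hQ : A * sin φ - B * cos φ = 0 :=
    (mul_eq_zero.mp (by linear_combination (h₁ - h₂) / 2 :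
      (A * sin φ - B * cos φ) * sin α = 0)).resolve_right hα
  have hAB : A ^ 2 + B ^ 2 = (A * cos φ + B * sin φ) ^ 2 + (A * sin φ - B * cos φ) ^ 2 := by
    linear_combination -(A ^ 2 + B ^ 2) * sin_sq_add_cos_sq φ
  rw [hAB, hQ, ← hP]
  ring

theorem re_mul_add_im_mul_eq_of_pole_of_inversion {x₀ : ℝ} (hx₀ : x₀ ^ 2 ≠ 1)
    {z h : ℂ} (hz : ‖z‖ = 1) (hzx : z ≠ x₀)
    (hpole : (conj ((x₀ : ℂ) + (z - x₀) / (‖z - x₀‖ ^ 2 : ℝ) - (x₀ ^ 3 / (x₀ ^ 2 + 1) : ℝ)) *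
      (h - (x₀ ^ 3 / (x₀ ^ 2 + 1) : ℝ))).re = 1) :
    z.re * ((1 - x₀ ^ 2) / (1 + x₀ ^ 2) *
        (h.re - x₀ * (3 * x₀ ^ 4 + 3 * x₀ ^ 2 + 2) / (x₀ ^ 4 - 1))) + z.im * h.im
      = 1 + x₀ ^ 2 := by
  have hunit : z.re ^ 2 + z.im ^ 2 = 1 := by
    have := Complex.sq_norm z
    rw [hz, Complex.normSq_apply] at this
    linear_combination -this
  have hdist : ‖z - x₀‖ ^ 2 = 1 - 2 * x₀ * z.re + x₀ ^ 2 := by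
    rw [Complex.sq_norm, Complex.normSq_apply]
    simp only [Complex.sub_re, Complex.sub_im, Complex.ofReal_re, Complex.ofReal_im]
    linear_combination hunit
  have hn : ‖z - x₀‖ ^ 2 ≠ 0 := pow_ne_zero 2 (norm_ne_zero_iff.mpr (sub_ne_zero.mpr hzx))
  have h4 : x₀ ^ 4 - 1 ≠ 0 := by
    intro h0; apply hx₀; nlinarith [sq_nonneg x₀]
  generalize ‖z - x₀‖ ^ 2 = n at hpole hdist hn
  simp only [Complex.mul_re, Complex.conj_re, Complex.conj_im, Complex.sub_re, Complex.sub_im,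
    Complex.add_re, Complex.add_im, Complex.ofReal_re, Complex.ofReal_im,
    Complex.div_ofReal_re, Complex.div_ofReal_im] at hpole
  field_simp at hpole ⊢
  linear_combination (x₀ ^ 2 - 1) *
    (hpole - (x₀ * ((x₀ ^ 2 + 1) * h.re - x₀ ^ 3) - (x₀ ^ 2 + 1) ^ 2) * hdist)

theorem cos_mul_add_sin_mul_eq_of_pole_of_inversion {x₀ θ : ℝ} (hx₀ : |x₀| < 1) {z h : ℂ}
    (hz : z = Complex.exp (θ * Complex.I))
    (hpole : (conj ((x₀ : ℂ) + (z - x₀) / (‖z - x₀‖ ^ 2 : ℝ) - (x₀ ^ 3 / (x₀ ^ 2 + 1) : ℝ)) *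
      (h - (x₀ ^ 3 / (x₀ ^ 2 + 1) : ℝ))).re = 1) :
    cos θ * ((1 - x₀ ^ 2) / (1 + x₀ ^ 2) *
        (h.re - x₀ * (3 * x₀ ^ 4 + 3 * x₀ ^ 2 + 2) / (x₀ ^ 4 - 1))) + sin θ * h.im
      = 1 + x₀ ^ 2 := by
  have hnorm : ‖z‖ = 1 := by rw [hz, Complex.norm_exp_ofReal_mul_I]
  have hzx : z ≠ x₀ := by
    rintro rfl; rw [Complex.norm_real, Real.norm_eq_abs] at hnorm; linarith
  have hsq : x₀ ^ 2 ≠ 1 := by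
    rw [← sq_abs]; nlinarith [abs_nonneg x₀]
  have := re_mul_add_im_mul_eq_of_pole_of_inversion hsq hnorm hzx hpole
  rwa [hz, Complex.exp_ofReal_mul_I_re, Complex.exp_ofReal_mul_I_im] at this

theorem pole_of_side_on_outer_homothetic_ellipse_general (N : ℕ) (hN : 3 ≤ N)
    (x0 t : ℝ) (hx1 : |x0| < 1)
    (z w : ℤ → ℂ)
    (hz : ∀ k : ℤ, z k = Complex.exp (Complex.I *
      ((2 * (Real.pi / N) * (k : ℝ) + t : ℝ) : ℂ)))
    (hw : ∀ k : ℤ, w k = (x0 : ℂ) + (z k - (x0 : ℂ)) / (‖z k - (x0 : ℂ)‖ ^ 2 : ℝ))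
    (K : ℂ) (hK : K = ((x0 ^ 3 / (x0 ^ 2 + 1) : ℝ) : ℂ))
    (aH bH xH : ℝ)
    (haH : aH = ((x0 ^ 2 + 1) ^ 2 / |1 - x0 ^ 2|) / Real.cos (Real.pi / N))
    (hbH : bH = (x0 ^ 2 + 1) / Real.cos (Real.pi / N))
    (hxH : xH = x0 * (3 * x0 ^ 4 + 3 * x0 ^ 2 + 2) / (x0 ^ 4 - 1))
    (k : ℤ) (h : ℂ)
    (hpole1 : (((starRingEnd ℂ) (w k - K)) * (h - K)).re = 1)
    (hpole2 : (((starRingEnd ℂ) (w (k + 1) - K)) * (h - K)).re = 1) :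
    (h.re - xH) ^ 2 / aH ^ 2 + h.im ^ 2 / bH ^ 2 = 1 := by
  set α := π / N
  have hsin : sin α ≠ 0 := by
    have hN' : (1 : ℝ) < N := by exact_mod_cast (by omega : 1 < N)
    exact (sin_pos_of_pos_of_lt_pi (by positivity) (div_lt_self pi_pos hN')).ne'
  have hzj (j : ℤ) : z j = Complex.exp ((2 * α * j + t : ℝ) * Complex.I) := by rw [hz, mul_comm]
  rw [hw, hK] at hpole1 hpole2
  have side₁ := cos_mul_add_sin_mul_eq_of_pole_of_inversion hx1 (hzj k) hpole1
  have side₂ := cos_mul_add_sin_mul_eq_of_pole_of_inversion hx1 (hzj (k + 1)) hpole2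
  rw [show 2 * α * ((k + 1 : ℤ) : ℝ) + t = 2 * α * k + t + 2 * α by push_cast; ring] at side₂
  have chord := sq_add_sq_mul_cos_sq_of_chord hsin side₁ side₂
  rw [← hxH] at chord
  have hcos : cos α ≠ 0 := by
    rintro hc; rw [hc] at chord; nlinarith [sq_nonneg x0]
  have h1 : 1 - x0 ^ 2 ≠ 0 := by
    rw [← sq_abs]; nlinarith [abs_nonneg x0]
  have h1' : 1 + x0 ^ 2 ≠ 0 := by positivity
  rw [haH, hbH, div_pow, div_pow, div_pow, sq_abs]
  field_simp at chord ⊢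
  linear_combination chord

/-- The poles of the sides of the harmonic polygon, with respect to the unit
circle centered at the symmedian point `K = x0³/(x0² + 1)`, lie on the outer
ellipse `E_H` of the Poncelet homothetic family. -/
theorem pole_of_side_on_outer_homothetic_ellipse (N : ℕ) (hN : 3 ≤ N)
    (x0 t : ℝ) (hx0 : 0 < |x0|) (hx1 : |x0| < 1)
    (z w : ℤ → ℂ)
    (hz : ∀ k : ℤ, z k = Complex.exp (Complex.I *
      ((2 * (Real.pi / N) * (k : ℝ) + t : ℝ) : ℂ)))
    (hw : ∀ k : ℤ, w k = (x0 : ℂ) + (z k - (x0 : ℂ)) / (‖z k - (x0 : ℂ)‖ ^ 2 : ℝ))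
    (K : ℂ) (hK : K = ((x0 ^ 3 / (x0 ^ 2 + 1) : ℝ) : ℂ))
    (aH bH xH : ℝ)
    (haH : aH = ((x0 ^ 2 + 1) ^ 2 / |1 - x0 ^ 2|) / Real.cos (Real.pi / N))
    (hbH : bH = (x0 ^ 2 + 1) / Real.cos (Real.pi / N))
    (hxH : xH = x0 * (3 * x0 ^ 4 + 3 * x0 ^ 2 + 2) / (x0 ^ 4 - 1))
    (k : ℤ) (h : ℂ)
    (hpole1 : (((starRingEnd ℂ) (w k - K)) * (h - K)).re = 1)
    (hpole2 : (((starRingEnd ℂ) (w (k + 1) - K)) * (h - K)).re = 1) :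
    (h.re - xH) ^ 2 / aH ^ 2 + h.im ^ 2 / bH ^ 2 = 1 :=
  pole_of_side_on_outer_homothetic_ellipse_general N hN x0 t hx1 z w hz hw K hK aH bH xH haH hbH hxH
    k h hpole1 hpole2
end

section
/- Let K = x0³/(x0² + 1), and set a_h = (x0² + 1)²/|1 − x0²|, b_h = x0² + 1, x_h = x0·(3x0⁴ + 3x0² + 2)/(x0⁴ − 1). For each index k let h_k be the pole of the line through w_k and w_{k+1} with respect to the unit circle centered at K. Then for each k the line through h_k and h_{k+1} is tangent to the ellipse E_h given by (x − x_h)²/a_h² + y²/b_h² = 1, i.e., it meets E_h in exactly one point. -/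
/-!
The polar of the vertex `w(θ) = x0 + (e^{iθ} - x0) / |e^{iθ} - x0|²` with respect to the unit
circle centred at `K` is exactly the tangent to `E_h` at `(x_h + a_h cos θ, b_h sin θ)`: indeed
`w(θ) - K` is a positive multiple of `((1 - x0²) cos θ, (x0² + 1) sin θ)`. The pole `h_k` of the
side `w_k w_{k+1}` lies on the polars of `w_k` and of `w_{k+1}`, so `h_k` and `h_{k+1}` both lie on
the polar of `w_{k+1}`, a tangent of `E_h`. They are distinct, because tangents of an ellipse at
parameters `θ`, `θ + β`, `θ + 2β` are concurrent only if `cos β = 1`.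
-/

open Real

theorem exists_eq_real_smul_of_re_mul_im_eq {D V : ℂ} (hD : D ≠ 0)
    (h : D.re * V.im = D.im * V.re) : ∃ s : ℝ, V = s • D := by
  have hreal : V / D = ((V / D).re : ℂ) := by
    refine Complex.ext (by simp) ?_
    rw [Complex.ofReal_im, Complex.div_im, mul_comm V.im, h]
    ring
  exact ⟨(V / D).re, by rw [Complex.real_smul, ← hreal, div_mul_cancel₀ V hD]⟩

/-- The tangent line at `(c + a cos φ, b sin φ)` to the ellipse `(x - c)²/a² + y²/b² = 1`. -/
def ellipseTangent (c a b φ : ℝ) : Set ℂ :=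
  {p | (p.re - c) / a * cos φ + p.im / b * sin φ = 1}

section ellipseTangent

variable {c a b φ : ℝ}

theorem mem_ellipseTangent {p : ℂ} :
    p ∈ ellipseTangent c a b φ ↔ (p.re - c) / a * cos φ + p.im / b * sin φ = 1 :=
  Iff.rfl

theorem eq_of_mem_ellipseTangent {p : ℂ} (ha : a ≠ 0) (hb : b ≠ 0)
    (hp : p ∈ ellipseTangent c a b φ) (he : (p.re - c) ^ 2 / a ^ 2 + p.im ^ 2 / b ^ 2 = 1) :
    p = ⟨c + a * cos φ, b * sin φ⟩ := by
  rw [mem_ellipseTangent] at hp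
  rw [← div_pow, ← div_pow] at he
  have hsq : ((p.re - c) / a - cos φ) ^ 2 + (p.im / b - sin φ) ^ 2 = 0 := by
    linear_combination he - 2 * hp + sin_sq_add_cos_sq φ
  have hu : (p.re - c) / a = cos φ := by nlinarith
  have hv : p.im / b = sin φ := by nlinarith
  apply Complex.ext
  · rw [← hu]; field_simp; ring
  · rw [← hv]; field_simp

theorem add_smul_sub_mem_ellipseTangent {P Q : ℂ} (hP : P ∈ ellipseTangent c a b φ)
    (hQ : Q ∈ ellipseTangent c a b φ) (s : ℝ) : P + s • (Q - P) ∈ ellipseTangent c a b φ := by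
  simp only [mem_ellipseTangent, Complex.add_re, Complex.add_im, Complex.real_smul,
    Complex.mul_re, Complex.mul_im, Complex.ofReal_re, Complex.ofReal_im,
    Complex.sub_re, Complex.sub_im] at *
  linear_combination (1 - s) * hP + s * hQ

theorem exists_eq_add_smul_sub_of_mem_ellipseTangent {P Q E : ℂ} (ha : a ≠ 0) (hb : b ≠ 0)
    (hPQ : P ≠ Q) (hP : P ∈ ellipseTangent c a b φ) (hQ : Q ∈ ellipseTangent c a b φ)
    (hE : E ∈ ellipseTangent c a b φ) : ∃ s : ℝ, E = P + s • (Q - P) := by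
  rw [mem_ellipseTangent] at hP hQ hE
  set D := Q - P
  set V := E - P
  -- `D` and `V` are both orthogonal to the nonzero normal `(cos φ / a, sin φ / b)`.
  have hD : D.re * cos φ / a + D.im * sin φ / b = 0 := by
    simp only [D, Complex.sub_re, Complex.sub_im]; linear_combination hQ - hP
  have hV : V.re * cos φ / a + V.im * sin φ / b = 0 := by
    simp only [V, Complex.sub_re, Complex.sub_im]; linear_combination hE - hP
  have hcross : D.re * V.im - D.im * V.re = 0 := by
    by_contra hX
    have hcos : cos φ = 0 := by
      have : cos φ / a * (D.re * V.im - D.im * V.re) = 0 := by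
        linear_combination V.im * hD - D.im * hV
      simpa [ha, hX] using this
    have hsin : sin φ = 0 := by
      have : sin φ / b * (D.re * V.im - D.im * V.re) = 0 := by
        linear_combination D.re * hV - V.re * hD
      simpa [hb, hX] using this
    simpa [hcos, hsin] using sin_sq_add_cos_sq φ
  obtain ⟨s, hs⟩ :=
    exists_eq_real_smul_of_re_mul_im_eq (sub_ne_zero.2 hPQ.symm) (sub_eq_zero.1 hcross)
  exact ⟨s, by rw [← hs]; ring⟩

theorem existsUnique_add_smul_sub_mem_ellipse {P Q : ℂ} (ha : a ≠ 0) (hb : b ≠ 0)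
    (hPQ : P ≠ Q) (hP : P ∈ ellipseTangent c a b φ) (hQ : Q ∈ ellipseTangent c a b φ) :
    ∃! p : ℂ, (∃ s : ℝ, p = P + s • (Q - P)) ∧
      (p.re - c) ^ 2 / a ^ 2 + p.im ^ 2 / b ^ 2 = 1 := by
  have hT : (⟨c + a * cos φ, b * sin φ⟩ : ℂ) ∈ ellipseTangent c a b φ := by
    rw [mem_ellipseTangent]; field_simp; linear_combination a * sin_sq_add_cos_sq φ
  refine ⟨⟨c + a * cos φ, b * sin φ⟩,
    ⟨exists_eq_add_smul_sub_of_mem_ellipseTangent ha hb hPQ hP hQ hT, ?_⟩, ?_⟩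
  · field_simp; linear_combination a ^ 2 * sin_sq_add_cos_sq φ
  · rintro p ⟨⟨s, rfl⟩, he⟩
    exact eq_of_mem_ellipseTangent ha hb (add_smul_sub_mem_ellipseTangent hP hQ s) he

theorem cos_eq_one_of_mem_ellipseTangent {β : ℝ} {p : ℂ}
    (h₀ : p ∈ ellipseTangent c a b φ) (h₁ : p ∈ ellipseTangent c a b (φ + β))
    (h₂ : p ∈ ellipseTangent c a b (φ + 2 * β)) : cos β = 1 := by
  simp only [mem_ellipseTangent, cos_add, sin_add, cos_two_mul, sin_two_mul] at h₀ h₁ h₂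
  set u := (p.re - c) / a
  set v := p.im / b
  have e₁ : (v * cos φ - u * sin φ) * sin β = 1 - cos β := by
    linear_combination h₁ - cos β * h₀
  have e₂ : (v * cos φ - u * sin φ) * (2 * sin β * cos β) = 2 * sin β ^ 2 := by
    linear_combination h₂ - (2 * cos β ^ 2 - 1) * h₀ - 2 * sin_sq_add_cos_sq β
  linear_combination (e₂ - 2 * cos β * e₁) / 2 + sin_sq_add_cos_sq β

end ellipseTangent

noncomputable def circleInversion (c z : ℂ) : ℂ := c + (z - c) / ((‖z - c‖ ^ 2 : ℝ) : ℂ)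

/-- The polar of `p` with respect to the unit circle centred at `c`. -/
def polarLine (c p : ℂ) : Set ℂ := {h | ((starRingEnd ℂ) (p - c) * (h - c)).re = 1}

theorem norm_exp_mul_I_sub_ofReal_sq (x θ : ℝ) :
    ‖Complex.exp (Complex.I * θ) - x‖ ^ 2 = 1 - 2 * x * cos θ + x ^ 2 := by
  rw [mul_comm Complex.I, Complex.sq_norm, Complex.normSq_apply, Complex.sub_re, Complex.sub_im,
    Complex.exp_ofReal_mul_I_re, Complex.exp_ofReal_mul_I_im, Complex.ofReal_re,
    Complex.ofReal_im]
  linear_combination sin_sq_add_cos_sq θ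

theorem exp_mul_I_ne_ofReal {x : ℝ} (hx : |x| ≠ 1) (θ : ℝ) :
    Complex.exp (Complex.I * θ) ≠ x := by
  intro h
  have := congrArg norm h
  rw [mul_comm, Complex.norm_exp_ofReal_mul_I, Complex.norm_real, Real.norm_eq_abs] at this
  exact hx this.symm

theorem polarLine_circleInversion_exp {x : ℝ} (hx : |x| ≠ 1) (θ : ℝ) :
    polarLine ((x ^ 3 / (x ^ 2 + 1) : ℝ) : ℂ)
        (circleInversion x (Complex.exp (Complex.I * θ))) =
      ellipseTangent (x * (3 * x ^ 4 + 3 * x ^ 2 + 2) / (x ^ 4 - 1))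
        ((x ^ 2 + 1) ^ 2 / (1 - x ^ 2)) (x ^ 2 + 1) θ := by
  have hm : 1 - 2 * x * cos θ + x ^ 2 ≠ 0 := by
    rw [← norm_exp_mul_I_sub_ofReal_sq]
    exact pow_ne_zero 2 (norm_ne_zero_iff.2 (sub_ne_zero.2 (exp_mul_I_ne_ofReal hx θ)))
  have hx2 : 1 - x ^ 2 ≠ 0 := by
    rwa [sub_ne_zero, ne_comm, ← sq_abs, ne_eq,
      pow_eq_one_iff_of_nonneg (abs_nonneg x) two_ne_zero]
  have hx4 : x ^ 4 - 1 ≠ 0 := by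
    rw [show x ^ 4 - 1 = -((1 - x ^ 2) * (x ^ 2 + 1)) by ring]
    exact neg_ne_zero.2 (mul_ne_zero hx2 (by positivity))
  ext P
  simp only [polarLine, circleInversion, Set.mem_ofPred_eq, mem_ellipseTangent,
    norm_exp_mul_I_sub_ofReal_sq, Complex.mul_re, Complex.conj_re, Complex.conj_im,
    Complex.sub_re, Complex.sub_im, Complex.add_re, Complex.add_im, Complex.div_ofReal_re,
    Complex.div_ofReal_im, Complex.ofReal_re, Complex.ofReal_im, sub_zero, zero_add]
  rw [mul_comm Complex.I, Complex.exp_ofReal_mul_I_re, Complex.exp_ofReal_mul_I_im]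
  generalize hM : 1 - 2 * x * cos θ + x ^ 2 = m at hm ⊢
  -- both conditions are affine in `P`, and they agree up to the factor `(x² + 1) / m`
  have hc : (x ^ 2 + 1) / m ≠ 0 := div_ne_zero (by positivity) hm
  conv_lhs => rw [← sub_eq_zero]
  conv_rhs => rw [← sub_eq_zero, ← mul_eq_zero_iff_left hc]
  refine Iff.of_eq (congrArg (· = 0) ?_)
  field_simp
  rw [← hM]
  ring

theorem pole_polygon_tangent_inner_homothetic_ellipse_general (N : ℕ) (hN : 3 ≤ N)
    (x0 t : ℝ) (hx1 : |x0| < 1)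
    (z w : ℤ → ℂ)
    (hz : ∀ k : ℤ, z k = Complex.exp (Complex.I *
      ((2 * (Real.pi / N) * (k : ℝ) + t : ℝ) : ℂ)))
    (hw : ∀ k : ℤ, w k = (x0 : ℂ) + (z k - (x0 : ℂ)) / ((‖z k - (x0 : ℂ)‖) ^ 2 : ℝ))
    (K : ℂ) (hK : K = ((x0 ^ 3 / (x0 ^ 2 + 1) : ℝ) : ℂ))
    (ah bh xh : ℝ)
    (hah : ah = (x0 ^ 2 + 1) ^ 2 / |1 - x0 ^ 2|)
    (hbh : bh = x0 ^ 2 + 1)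
    (hxh : xh = x0 * (3 * x0 ^ 4 + 3 * x0 ^ 2 + 2) / (x0 ^ 4 - 1))
    (h : ℤ → ℂ)
    (hpole : ∀ k : ℤ, (((starRingEnd ℂ) (w k - K)) * (h k - K)).re = 1 ∧
      (((starRingEnd ℂ) (w (k + 1) - K)) * (h k - K)).re = 1)
    (k : ℤ) :
    ∃! p : ℂ, (∃ s : ℝ, p = h k + s • (h (k + 1) - h k)) ∧
      (p.re - xh) ^ 2 / ah ^ 2 + p.im ^ 2 / bh ^ 2 = 1 := by
  have hd : 0 < 1 - x0 ^ 2 := by nlinarith [sq_abs x0, abs_nonneg x0]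
  rw [abs_of_pos hd] at hah
  subst hah hbh hxh hK
  set β := 2 * (π / N)
  set θ : ℤ → ℝ := fun j => β * j + t
  have hθ : ∀ j : ℤ, θ (j + 1) = θ j + β := fun j => by simp only [θ]; push_cast; ring
  have hpolar : ∀ i j : ℤ, h j ∈ polarLine _ (w i) → h j ∈ ellipseTangent _ _ _ (θ i) :=
    fun i j hij => by
      have hwi : w i = circleInversion x0 (Complex.exp (Complex.I * θ i)) := by
        rw [hw i, hz i]; rfl
      rwa [← polarLine_circleInversion_exp hx1.ne, ← hwi]
  have h₀ := hpolar k k (hpole k).1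
  have h₁ := hpolar (k + 1) k (hpole k).2
  have h₂ := hpolar (k + 1) (k + 1) (hpole (k + 1)).1
  have h₃ := hpolar (k + 1 + 1) (k + 1) (hpole (k + 1)).2
  have hcos : cos β ≠ 1 := by
    have hN' : (1 : ℝ) < N := by exact_mod_cast (by omega : 1 < N)
    have hβ : 0 < β := by positivity
    have hβ' : β < 2 * π := by linarith [div_lt_self pi_pos hN']
    rw [Ne, cos_eq_one_iff_of_lt_of_lt (by linarith [pi_pos]) hβ']
    exact hβ.ne'
  have hne : h k ≠ h (k + 1) := fun heq => hcos <|
    cos_eq_one_of_mem_ellipseTangent h₀ (hθ k ▸ h₁)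
      (by rw [heq, show θ k + 2 * β = θ (k + 1 + 1) by rw [hθ, hθ]; ring]; exact h₃)
  exact existsUnique_add_smul_sub_mem_ellipse (by positivity) (by positivity) hne h₁ h₂

/-- The lines joining consecutive poles (of the sides of the harmonic polygon,
with respect to the unit circle centered at the symmedian point
`K = x0³/(x0² + 1)`) are tangent to the inner ellipse `E_h` of the Poncelet
homothetic family: each such line meets `E_h` in exactly one point. -/
theorem pole_polygon_tangent_inner_homothetic_ellipse (N : ℕ) (hN : 3 ≤ N)
    (x0 t : ℝ) (hx0 : 0 < |x0|) (hx1 : |x0| < 1)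
    (z w : ℤ → ℂ)
    (hz : ∀ k : ℤ, z k = Complex.exp (Complex.I *
      ((2 * (Real.pi / N) * (k : ℝ) + t : ℝ) : ℂ)))
    (hw : ∀ k : ℤ, w k = (x0 : ℂ) + (z k - (x0 : ℂ)) / ((‖z k - (x0 : ℂ)‖) ^ 2 : ℝ))
    (K : ℂ) (hK : K = ((x0 ^ 3 / (x0 ^ 2 + 1) : ℝ) : ℂ))
    (ah bh xh : ℝ)
    (hah : ah = (x0 ^ 2 + 1) ^ 2 / |1 - x0 ^ 2|)
    (hbh : bh = x0 ^ 2 + 1)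
    (hxh : xh = x0 * (3 * x0 ^ 4 + 3 * x0 ^ 2 + 2) / (x0 ^ 4 - 1))
    (h : ℤ → ℂ)
    (hpole : ∀ k : ℤ, (((starRingEnd ℂ) (w k - K)) * (h k - K)).re = 1 ∧
      (((starRingEnd ℂ) (w (k + 1) - K)) * (h k - K)).re = 1)
    (k : ℤ) :
    ∃! p : ℂ, (∃ s : ℝ, p = h k + s • (h (k + 1) - h k)) ∧
      (p.re - xh) ^ 2 / ah ^ 2 + p.im ^ 2 / bh ^ 2 = 1 :=
  pole_polygon_tangent_inner_homothetic_ellipse_general N hN x0 t hx1 z w hz hw K hK ah bh xh hah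
    hbh hxh h hpole k
end

section
/- Let K = x0³/(x0² + 1) (a real point, regarded as a point of ℂ). Then there exists a constant c > 0, depending only on N and x0, such that for every real t and every index k, the Euclidean distance from K to the line through w_k and w_{k+1} equals c·|w_{k+1} − w_k|. (That is, K is a symmedian point for every polygon of the family: its distance to each sideline is the same fixed proportion of that side's length.) -/
/-!
On the unit circle the inversion centred at `x0` is the Möbius map `M z = x0 + z / (1 - x0 z)`,
and consecutive vertices are `M u`, `M (ω u)` with `ω = exp (2πi/N)`, `|u| = 1`. The distance from
`K` to the line through `a` with direction `v` is `|Im ((K - a) / v)| · |v|`, and here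
`(K - M u) / (M (ω u) - M u) = -(x0 (ū - ω u) / (ω - 1) + (1 - x0² ω) / (ω - 1)) / (x0² + 1)`.
The first summand is real (it is invariant under conjugation), so the imaginary part does not
depend on `u`: it is `(1 - x0²) Im ω / ((x0² + 1) |ω - 1|²)`.
-/

open Complex ComplexConjugate

lemma infDist_line_eq_abs_im_div_mul_norm (p a v : ℂ) (hv : v ≠ 0) :
    Metric.infDist p {q : ℂ | ∃ s : ℝ, q = a + s • v} = |((p - a) / v).im| * ‖v‖ := by
  set r := (p - a) / v
  have hdist : ∀ s : ℝ, dist p (a + s • v) = ‖r - s‖ * ‖v‖ := by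
    intro s
    rw [dist_eq_norm, ← norm_mul, sub_mul, div_mul_cancel₀ _ hv, real_smul]
    ring_nf
  apply le_antisymm
  · have hfoot : r - r.re = r.im * I := by apply Complex.ext <;> simp
    calc _ ≤ dist p (a + r.re • v) := Metric.infDist_le_dist_of_mem (by exact ⟨r.re, rfl⟩)
      _ = _ := by rw [hdist, hfoot, norm_mul, norm_I, mul_one, norm_real, Real.norm_eq_abs]
  · rw [Metric.le_infDist (by exact ⟨a, 0, by simp⟩)]
    rintro _ ⟨s, rfl⟩
    rw [hdist]
    gcongr
    simpa using abs_im_le_norm (r - s)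

lemma inversion_eq_of_norm_eq_one (x : ℝ) {z : ℂ} (hz : ‖z‖ = 1) :
    (x : ℂ) + (z - x) / ((‖z - x‖ ^ 2 : ℝ) : ℂ) = x + z / (1 - x * z) := by
  have hz0 : z ≠ 0 := by rintro rfl; simp at hz
  have hconj : conj (z - x) = (1 - x * z) / z := by
    rw [map_sub, conj_ofReal, ← inv_eq_conj hz]
    field_simp
  have hinv : (z - x) / ((‖z - x‖ ^ 2 : ℝ) : ℂ) = (conj (z - x))⁻¹ := by
    rw [inv_def, conj_conj, normSq_conj, Complex.sq_norm, div_eq_mul_inv, ofReal_inv]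
  rw [hinv, hconj, inv_div]

lemma im_inv_sub_mul_div_sub_one {u ω : ℂ} (hu : ‖u‖ = 1) (hω : ‖ω‖ = 1) :
    ((u⁻¹ - ω * u) / (ω - 1)).im = 0 := by
  rcases eq_or_ne ω 1 with rfl | hω1
  · simp
  have hu0 : u ≠ 0 := by rintro rfl; simp at hu
  have hω0 : ω ≠ 0 := by rintro rfl; simp at hω
  rw [← conj_eq_iff_im, map_div₀, map_sub, map_sub, map_mul, map_inv₀, map_one,
    ← inv_eq_conj hu, ← inv_eq_conj hω, inv_inv]
  have : ω⁻¹ - 1 ≠ 0 := by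
    rw [sub_ne_zero, Ne, inv_eq_one]; exact hω1
  have : ω - 1 ≠ 0 := sub_ne_zero.2 hω1
  field_simp
  ring

lemma im_one_sub_sq_mul_div_sub_one (x : ℝ) (ω : ℂ) :
    ((1 - x ^ 2 * ω) / (ω - 1)).im = -((1 - x ^ 2) * ω.im / normSq (ω - 1)) := by
  rw [← ofReal_pow]
  simp only [div_im, sub_im, sub_re, one_im, one_re, re_ofReal_mul, im_ofReal_mul]
  ring

lemma one_sub_mul_ne_zero {x : ℝ} {z : ℂ} (hx : |x| < 1) (hz : ‖z‖ = 1) : 1 - x * z ≠ 0 := by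
  intro h
  have : ‖(x : ℂ) * z‖ = 1 := by rw [← sub_eq_zero.1 h, norm_one]
  rw [norm_mul, hz, mul_one, norm_real, Real.norm_eq_abs] at this
  exact hx.ne this

lemma mobius_mul_sub_mobius {x : ℝ} {u ω : ℂ} (hxu : 1 - x * u ≠ 0)
    (hxωu : 1 - x * (ω * u) ≠ 0) :
    (x + ω * u / (1 - x * (ω * u))) - (x + u / (1 - x * u)) =
      u * (ω - 1) / ((1 - x * u) * (1 - x * (ω * u))) := by
  rw [add_sub_add_left_eq_sub, div_sub_div _ _ hxωu hxu,
    div_eq_div_iff (mul_ne_zero hxωu hxu) (mul_ne_zero hxu hxωu)]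
  ring

lemma im_symmedian_sub_div_mobius_side (x : ℝ) {u ω : ℂ} (hu : ‖u‖ = 1) (hω : ‖ω‖ = 1)
    (hω1 : ω ≠ 1) (hxu : 1 - x * u ≠ 0) (hxωu : 1 - x * (ω * u) ≠ 0) :
    ((((x ^ 3 / (x ^ 2 + 1) : ℝ) : ℂ) - (x + u / (1 - x * u))) /
        ((x + ω * u / (1 - x * (ω * u))) - (x + u / (1 - x * u)))).im =
      (1 - x ^ 2) * ω.im / ((x ^ 2 + 1) * normSq (ω - 1)) := by
  have hu0 : u ≠ 0 := by rintro rfl; simp at hu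
  have hω1' : ω - 1 ≠ 0 := sub_ne_zero.2 hω1
  have hx : (x : ℂ) ^ 2 + 1 ≠ 0 := by exact_mod_cast (by positivity : x ^ 2 + 1 ≠ 0)
  have hratio : (((x ^ 3 / (x ^ 2 + 1) : ℝ) : ℂ) - (x + u / (1 - x * u))) /
        ((x + ω * u / (1 - x * (ω * u))) - (x + u / (1 - x * u))) =
      -(x * ((u⁻¹ - ω * u) / (ω - 1)) + (1 - x ^ 2 * ω) / (ω - 1)) / ((x ^ 2 + 1 : ℝ) : ℂ) := by
    rw [mobius_mul_sub_mobius hxu hxωu]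
    push_cast
    field_simp
    ring
  rw [hratio, div_ofReal_im, neg_im, add_im, im_ofReal_mul, im_inv_sub_mul_div_sub_one hu hω,
    im_one_sub_sq_mul_div_sub_one]
  field_simp
  ring

open Real

theorem symmedian_point_distance_proportional_general (N : ℕ) (hN : 3 ≤ N)
    (x0 : ℝ) (hx1 : |x0| < 1)
    (z w : ℝ → ℤ → ℂ)
    (hz : ∀ (t : ℝ) (k : ℤ), z t k = Complex.exp (Complex.I *
      ((2 * (Real.pi / N) * (k : ℝ) + t : ℝ) : ℂ)))
    (hw : ∀ (t : ℝ) (k : ℤ), w t k = (x0 : ℂ) +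
      (z t k - (x0 : ℂ)) / ((‖z t k - (x0 : ℂ)‖) ^ 2 : ℝ))
    (K : ℂ) (hK : K = ((x0 ^ 3 / (x0 ^ 2 + 1) : ℝ) : ℂ)) :
    ∃ c : ℝ, 0 < c ∧ ∀ (t : ℝ) (k : ℤ),
      Metric.infDist K {p : ℂ | ∃ s : ℝ, p = w t k + s • (w t (k + 1) - w t k)} =
        c * ‖w t (k + 1) - w t k‖ := by
  set ω : ℂ := exp (((2 * (π / N) : ℝ) : ℂ) * I)
  have hω : ‖ω‖ = 1 := norm_exp_ofReal_mul_I _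
  have hω_im : 0 < ω.im := by
    have hN' : (3 : ℝ) ≤ N := by exact_mod_cast hN
    rw [exp_ofReal_mul_I_im]
    refine sin_pos_of_pos_of_lt_pi (by positivity) ?_
    rw [← mul_div_assoc, div_lt_iff₀ (by positivity)]
    nlinarith [pi_pos]
  have hω1 : ω ≠ 1 := fun h => by simp [h] at hω_im
  have hx2 : x0 ^ 2 < 1 := (sq_lt_one_iff_abs_lt_one x0).2 hx1
  have hc : 0 < (1 - x0 ^ 2) * ω.im / ((x0 ^ 2 + 1) * normSq (ω - 1)) :=
    div_pos (mul_pos (by linarith) hω_im)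
      (mul_pos (by positivity) (normSq_pos.2 (sub_ne_zero.2 hω1)))
  refine ⟨_, hc, fun t k => ?_⟩
  have hz_norm : ∀ m, ‖z t m‖ = 1 := fun m => by rw [hz, mul_comm]; exact norm_exp_ofReal_mul_I _
  have hz_succ : z t (k + 1) = ω * z t k := by
    rw [hz, hz, ← Complex.exp_add]
    congr 1
    push_cast
    ring
  set u := z t k
  have hu := hz_norm k
  have hxu := one_sub_mul_ne_zero hx1 hu
  have hxωu := one_sub_mul_ne_zero hx1 (z := ω * u) (by rw [norm_mul, hω, hu, one_mul])
  have hw_k : w t k = x0 + u / (1 - x0 * u) := by rw [hw, inversion_eq_of_norm_eq_one x0 hu]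
  have hw_succ : w t (k + 1) = x0 + ω * u / (1 - x0 * (ω * u)) := by
    rw [hw, inversion_eq_of_norm_eq_one x0 (hz_norm _), hz_succ]
  have hside : w t (k + 1) - w t k ≠ 0 := by
    rw [hw_k, hw_succ, mobius_mul_sub_mobius hxu hxωu]
    exact div_ne_zero (mul_ne_zero (by rintro h; simp [h] at hu) (sub_ne_zero.2 hω1))
      (mul_ne_zero hxu hxωu)
  rw [infDist_line_eq_abs_im_div_mul_norm _ _ _ hside, hK, hw_k, hw_succ,
    im_symmedian_sub_div_mobius_side x0 hu hω hω1 hxu hxωu, abs_of_pos hc]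

/-- `K = x0³/(x0² + 1)` is a symmedian point for every polygon of the harmonic
family: there is a constant `c > 0`, depending only on `N` and `x0`, such that
for every `t` and every `k`, the distance from `K` to the sideline through
`w_k` and `w_{k+1}` equals `c` times the sidelength `|w_{k+1} − w_k|`. -/
theorem symmedian_point_distance_proportional (N : ℕ) (hN : 3 ≤ N)
    (x0 : ℝ) (hx0 : 0 < |x0|) (hx1 : |x0| < 1)
    (z w : ℝ → ℤ → ℂ)
    (hz : ∀ (t : ℝ) (k : ℤ), z t k = Complex.exp (Complex.I *
      ((2 * (Real.pi / N) * (k : ℝ) + t : ℝ) : ℂ)))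
    (hw : ∀ (t : ℝ) (k : ℤ), w t k = (x0 : ℂ) +
      (z t k - (x0 : ℂ)) / ((‖z t k - (x0 : ℂ)‖) ^ 2 : ℝ))
    (K : ℂ) (hK : K = ((x0 ^ 3 / (x0 ^ 2 + 1) : ℝ) : ℂ)) :
    ∃ c : ℝ, 0 < c ∧ ∀ (t : ℝ) (k : ℤ),
      Metric.infDist K {p : ℂ | ∃ s : ℝ, p = w t k + s • (w t (k + 1) - w t k)} =
        c * ‖w t (k + 1) - w t k‖ :=
  symmedian_point_distance_proportional_general N hN x0 hx1 z w hz hw K hK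
end

section
/- Let κ = 2x0·cos(2α) − x0³ − 1/x0, x_c = ((2x0² − 1)·cos(2α) − x0⁴ + x0² − 1)/κ, κ′ = (x0² + 1)² − 4x0²·cos²α, a = (1 − x0²)·cos α/κ′, and b = cos α/√κ′. Then for every index k and every real t, the line through w_k and w_{k+1} is tangent to the Brocard inellipse E given by (x − x_c)²/a² + y²/b² = 1, i.e., it meets E in exactly one point. -/
/-!
Write the side `w_k w_{k+1}` as the image of the chord from `e^{i(u-α)}` to `e^{i(u+α)}`, where
`u = 2αk + t + α`. Both inverted endpoints satisfy `n · (w - x0) = cos α - x0 cos u` for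
`n = ((1 + x0²) cos u - 2 x0 cos α, (1 - x0²) sin u)`, and their difference is a nonzero multiple
of `n` turned by a right angle. A line `n · p = h` meets `(x - x_c)²/a² + y²/b² = 1` in a single
point exactly when the quadratic along the line has vanishing discriminant,
`a² n₁² + b² n₂² = (h - n₁ x_c)²`; for the given `x_c, a, b` this is a polynomial identity in
`cos u, sin u` modulo `cos² u + sin² u = 1`, so it holds for every `t` and `k`.
-/

open Real

theorem existsUnique_line_inter_ellipse_of_tangent {a b : ℝ} (ha : a ≠ 0) (hb : b ≠ 0)
    (c p d : ℂ) (hd : d ≠ 0)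
    (htan : b ^ 2 * d.re ^ 2 + a ^ 2 * d.im ^ 2 =
      ((p.re - c.re) * d.im - (p.im - c.im) * d.re) ^ 2) :
    ∃! q : ℂ, (∃ s : ℝ, q = p + s • d) ∧
      (q.re - c.re) ^ 2 / a ^ 2 + (q.im - c.im) ^ 2 / b ^ 2 = 1 := by
  set X := p.re - c.re
  set Y := p.im - c.im
  set A := b ^ 2 * d.re ^ 2 + a ^ 2 * d.im ^ 2
  set B := b ^ 2 * X * d.re + a ^ 2 * Y * d.im
  have hA : 0 < A := by
    have : d.re ≠ 0 ∨ d.im ≠ 0 := by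
      by_contra! h
      exact hd (Complex.ext h.1 h.2)
    rcases this with h | h
    · exact add_pos_of_pos_of_nonneg (by positivity) (by positivity)
    · exact add_pos_of_nonneg_of_pos (by positivity) (by positivity)
  -- Along the line the equation reads `(A s + B)² = 0`: `htan` says the discriminant vanishes.
  have on_ellipse_iff (s : ℝ) :
      ((p + s • d).re - c.re) ^ 2 / a ^ 2 + ((p + s • d).im - c.im) ^ 2 / b ^ 2 = 1 ↔
        A * s + B = 0 := by
    have hquad :
        A * (((p + s • d).re - c.re) ^ 2 / a ^ 2 + ((p + s • d).im - c.im) ^ 2 / b ^ 2 - 1) =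
          (A * s + B) ^ 2 / (a ^ 2 * b ^ 2) := by
      simp only [Complex.add_re, Complex.add_im, Complex.real_smul, Complex.mul_re, Complex.mul_im,
        Complex.ofReal_re, Complex.ofReal_im, zero_mul, sub_zero, add_zero]
      field_simp
      linear_combination (-(a ^ 2 * b ^ 2)) * htan
    rw [← sub_eq_zero, ← mul_eq_zero_iff_left hA.ne', hquad]
    simp [ha, hb]
  refine ⟨p + (-B / A) • d, ⟨⟨_, rfl⟩, (on_ellipse_iff _).2 (by field_simp; ring)⟩, ?_⟩
  rintro q ⟨⟨s, rfl⟩, hq⟩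
  have hs : s = -B / A := by
    rw [eq_div_iff hA.ne']
    linear_combination (on_ellipse_iff s).1 hq
  rw [hs]

theorem norm_sub_ofReal_sq_of_norm_eq_one {z : ℂ} (hz : ‖z‖ = 1) (x : ℝ) :
    ‖z - x‖ ^ 2 = 1 - 2 * x * z.re + x ^ 2 := by
  have hz2 := Complex.sq_norm z
  rw [hz, Complex.normSq_apply] at hz2
  rw [Complex.sq_norm, Complex.normSq_apply, Complex.sub_re, Complex.sub_im,
    Complex.ofReal_re, Complex.ofReal_im]
  linear_combination -hz2

theorem one_sub_two_mul_re_add_sq_pos {z : ℂ} (hz : ‖z‖ = 1) {x : ℝ} (hx : x ^ 2 ≠ 1) :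
    0 < 1 - 2 * x * z.re + x ^ 2 := by
  rw [← norm_sub_ofReal_sq_of_norm_eq_one hz]
  refine pow_pos (norm_pos_iff.2 (sub_ne_zero.2 fun h => hx ?_)) 2
  have hx1 : ‖(x : ℂ)‖ = 1 := h ▸ hz
  rw [Complex.norm_real, Real.norm_eq_abs] at hx1
  rw [← sq_abs, hx1, one_pow]

theorem re_im_of_eq_inversion {z w : ℂ} (hz : ‖z‖ = 1) {x : ℝ}
    (hw : w = x + (z - x) / ((‖z - x‖ ^ 2 : ℝ) : ℂ)) :
    w.re = x + (z.re - x) / (1 - 2 * x * z.re + x ^ 2) ∧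
      w.im = z.im / (1 - 2 * x * z.re + x ^ 2) := by
  rw [norm_sub_ofReal_sq_of_norm_eq_one hz] at hw
  subst hw
  simp only [Complex.add_re, Complex.add_im, Complex.div_ofReal_re, Complex.div_ofReal_im,
    Complex.sub_re, Complex.sub_im, Complex.ofReal_re, Complex.ofReal_im, sub_zero, zero_add,
    and_self]

theorem inversion_chord_sub {x0 u α D₁ D₂ : ℝ}
    (hD₁ : D₁ = 1 - 2 * x0 * cos (u - α) + x0 ^ 2) (hD₂ : D₂ = 1 - 2 * x0 * cos (u + α) + x0 ^ 2)
    (hD₁0 : D₁ ≠ 0) (hD₂0 : D₂ ≠ 0) :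
    (x0 + (cos (u + α) - x0) / D₂) - (x0 + (cos (u - α) - x0) / D₁) =
        -(2 * sin α / (D₁ * D₂)) * ((1 - x0 ^ 2) * sin u) ∧
      sin (u + α) / D₂ - sin (u - α) / D₁ =
        2 * sin α / (D₁ * D₂) * ((1 + x0 ^ 2) * cos u - 2 * x0 * cos α) := by
  rw [cos_add, cos_sub] at *
  rw [sin_add, sin_sub]
  constructor
  · field_simp
    rw [hD₁, hD₂]
    ring
  · field_simp
    rw [hD₁, hD₂]
    linear_combination (-4 * x0 * sin α * cos α) * sin_sq_add_cos_sq u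

theorem inversion_chord_start_mem_line {x0 u α D : ℝ}
    (hD : D = 1 - 2 * x0 * cos (u - α) + x0 ^ 2) (hD0 : D ≠ 0) :
    ((1 + x0 ^ 2) * cos u - 2 * x0 * cos α) * ((cos (u - α) - x0) / D) +
        (1 - x0 ^ 2) * sin u * (sin (u - α) / D) = cos α - x0 * cos u := by
  rw [cos_sub, sin_sub] at *
  field_simp
  rw [hD]
  linear_combination ((1 - x0 ^ 2) * cos α) * sin_sq_add_cos_sq u

theorem brocard_tangency_identity {x0 c C S κ xc a b : ℝ} (hCS : S ^ 2 + C ^ 2 = 1)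
    (hκ : κ = (x0 ^ 2 + 1) ^ 2 - 4 * x0 ^ 2 * c ^ 2) (hκ0 : κ ≠ 0)
    (hxc : xc = x0 * (x0 ^ 2 + x0 ^ 4 + 2 * c ^ 2 * (1 - 2 * x0 ^ 2)) / κ)
    (ha : a = (1 - x0 ^ 2) * c / κ) (hb : b ^ 2 = c ^ 2 / κ) :
    a ^ 2 * ((1 + x0 ^ 2) * C - 2 * x0 * c) ^ 2 + b ^ 2 * ((1 - x0 ^ 2) * S) ^ 2 =
      (c - x0 * C + ((1 + x0 ^ 2) * C - 2 * x0 * c) * (x0 - xc)) ^ 2 := by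
  rw [hxc, ha, hb]
  field_simp
  rw [hκ]
  linear_combination (c ^ 2 * (1 - x0 ^ 2) ^ 2 * ((x0 ^ 2 + 1) ^ 2 - 4 * x0 ^ 2 * c ^ 2)) * hCS

theorem brocard_kappa_pos {x0 : ℝ} (hx0 : x0 ^ 2 ≠ 1) (α : ℝ) :
    0 < (x0 ^ 2 + 1) ^ 2 - 4 * x0 ^ 2 * cos α ^ 2 := by
  have h : (x0 ^ 2 + 1) ^ 2 - 4 * x0 ^ 2 * cos α ^ 2 =
      (1 - x0 ^ 2) ^ 2 + 4 * x0 ^ 2 * sin α ^ 2 := by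
    linear_combination -4 * x0 ^ 2 * sin_sq_add_cos_sq α
  have h1 : 1 - x0 ^ 2 ≠ 0 := sub_ne_zero.2 hx0.symm
  rw [h]
  positivity

theorem inversion_chord_normal_ne_zero {x0 : ℝ} (hx0 : x0 ^ 2 ≠ 1) (α u : ℝ) :
    (1 + x0 ^ 2) * cos u - 2 * x0 * cos α ≠ 0 ∨ (1 - x0 ^ 2) * sin u ≠ 0 := by
  by_contra! h
  have hS : sin u = 0 := (mul_eq_zero.1 h.2).resolve_left (sub_ne_zero.2 hx0.symm)
  refine (brocard_kappa_pos hx0 α).ne' ?_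
  linear_combination -(x0 ^ 2 + 1) ^ 2 * sin_sq_add_cos_sq u + (x0 ^ 2 + 1) ^ 2 * sin u * hS
    + ((1 + x0 ^ 2) * cos u + 2 * x0 * cos α) * h.1

theorem inversion_chord_direction_and_line {x0 α u : ℝ} (hx0 : x0 ^ 2 ≠ 1) (hsin : sin α ≠ 0)
    {z₁ z₂ w₁ w₂ : ℂ}
    (hw₁ : w₁ = x0 + (z₁ - x0) / ((‖z₁ - x0‖ ^ 2 : ℝ) : ℂ))
    (hw₂ : w₂ = x0 + (z₂ - x0) / ((‖z₂ - x0‖ ^ 2 : ℝ) : ℂ))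
    (hz₁ : z₁ = Complex.exp ((u - α : ℝ) * Complex.I))
    (hz₂ : z₂ = Complex.exp ((u + α : ℝ) * Complex.I)) :
    ∃ l ≠ 0, (w₂ - w₁).re = -l * ((1 - x0 ^ 2) * sin u) ∧
      (w₂ - w₁).im = l * ((1 + x0 ^ 2) * cos u - 2 * x0 * cos α) ∧
      ((1 + x0 ^ 2) * cos u - 2 * x0 * cos α) * (w₁.re - x0) + (1 - x0 ^ 2) * sin u * w₁.im =
        cos α - x0 * cos u := by
  have hnorm₁ : ‖z₁‖ = 1 := hz₁ ▸ Complex.norm_exp_ofReal_mul_I _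
  have hnorm₂ : ‖z₂‖ = 1 := hz₂ ▸ Complex.norm_exp_ofReal_mul_I _
  have hD₁ := (one_sub_two_mul_re_add_sq_pos hnorm₁ hx0).ne'
  have hD₂ := (one_sub_two_mul_re_add_sq_pos hnorm₂ hx0).ne'
  obtain ⟨hre₁, him₁⟩ := re_im_of_eq_inversion hnorm₁ hw₁
  obtain ⟨hre₂, him₂⟩ := re_im_of_eq_inversion hnorm₂ hw₂
  simp only [hz₁, hz₂, Complex.exp_ofReal_mul_I_re, Complex.exp_ofReal_mul_I_im]
    at hD₁ hD₂ hre₁ him₁ hre₂ him₂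
  obtain ⟨hdre, hdim⟩ := inversion_chord_sub rfl rfl hD₁ hD₂
  refine ⟨_, div_ne_zero (mul_ne_zero two_ne_zero hsin) (mul_ne_zero hD₁ hD₂), ?_, ?_, ?_⟩
  · rw [Complex.sub_re, hre₁, hre₂, hdre]
  · rw [Complex.sub_im, him₁, him₂, hdim]
  · rw [hre₁, him₁, add_sub_cancel_left]
    exact inversion_chord_start_mem_line rfl hD₁

theorem inversion_chord_tangent_brocard {x0 α u κ xc a b : ℝ} (hx0 : x0 ^ 2 ≠ 1)
    (hcos : cos α ≠ 0) (hsin : sin α ≠ 0)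
    (hκ : κ = (x0 ^ 2 + 1) ^ 2 - 4 * x0 ^ 2 * cos α ^ 2)
    (hxc : xc = x0 * (x0 ^ 2 + x0 ^ 4 + 2 * cos α ^ 2 * (1 - 2 * x0 ^ 2)) / κ)
    (ha : a = (1 - x0 ^ 2) * cos α / κ) (hb : b ^ 2 = cos α ^ 2 / κ)
    {z₁ z₂ w₁ w₂ : ℂ}
    (hw₁ : w₁ = x0 + (z₁ - x0) / ((‖z₁ - x0‖ ^ 2 : ℝ) : ℂ))
    (hw₂ : w₂ = x0 + (z₂ - x0) / ((‖z₂ - x0‖ ^ 2 : ℝ) : ℂ))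
    (hz₁ : z₁ = Complex.exp ((u - α : ℝ) * Complex.I))
    (hz₂ : z₂ = Complex.exp ((u + α : ℝ) * Complex.I)) :
    ∃! p : ℂ, (∃ s : ℝ, p = w₁ + s • (w₂ - w₁)) ∧
      (p.re - xc) ^ 2 / a ^ 2 + p.im ^ 2 / b ^ 2 = 1 := by
  have hκ0 : κ ≠ 0 := hκ ▸ (brocard_kappa_pos hx0 α).ne'
  have ha0 : a ≠ 0 := ha ▸ div_ne_zero (mul_ne_zero (sub_ne_zero.2 hx0.symm) hcos) hκ0
  have hb0 : b ≠ 0 := by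
    rintro rfl
    exact div_ne_zero (pow_ne_zero 2 hcos) hκ0 (by rw [← hb]; ring)
  obtain ⟨l, hl, hdre, hdim, hline⟩ :=
    inversion_chord_direction_and_line hx0 hsin hw₁ hw₂ hz₁ hz₂
  have htan := brocard_tangency_identity (sin_sq_add_cos_sq u) hκ hκ0 hxc ha hb
  have hn := inversion_chord_normal_ne_zero hx0 α u
  set n₁ := (1 + x0 ^ 2) * cos u - 2 * x0 * cos α
  set n₂ := (1 - x0 ^ 2) * sin u
  clear_value n₁ n₂
  have hd : w₂ - w₁ ≠ 0 := by
    intro h0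
    rw [h0, Complex.zero_re] at hdre
    rw [h0, Complex.zero_im] at hdim
    rcases hn with h | h
    · exact h ((mul_eq_zero.1 hdim.symm).resolve_left hl)
    · exact h ((mul_eq_zero.1 hdre.symm).resolve_left (neg_ne_zero.2 hl))
  have := existsUnique_line_inter_ellipse_of_tangent ha0 hb0 xc w₁ (w₂ - w₁) hd (by
    rw [hdre, hdim, Complex.ofReal_re, Complex.ofReal_im, sub_zero]
    linear_combination l ^ 2 * htan - l ^ 2 * (n₁ * (w₁.re - x0) + n₂ * w₁.im
      + cos α - x0 * cos u + 2 * n₁ * (x0 - xc)) * hline)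
  simpa only [Complex.ofReal_re, Complex.ofReal_im, sub_zero] using this

/-- Every side of the harmonic polygon is tangent to the Brocard inellipse:
for every `t` and `k`, the line through `w_k` and `w_{k+1}` meets the ellipse
`(x − x_c)²/a² + y²/b² = 1` in exactly one point, where
`κ = 2x0·cos(2α) − x0³ − 1/x0`,
`x_c = ((2x0² − 1)·cos(2α) − x0⁴ + x0² − 1)/κ`,
`κ′ = (x0² + 1)² − 4x0²·cos²α`, `a = (1 − x0²)·cos α/κ′`, `b = cos α/√κ′`. -/
theorem sides_tangent_brocard_inellipse (N : ℕ) (hN : 3 ≤ N)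
    (x0 : ℝ) (hx0 : 0 < |x0|) (hx1 : |x0| < 1)
    (z w : ℝ → ℤ → ℂ)
    (hz : ∀ (t : ℝ) (k : ℤ), z t k = Complex.exp (Complex.I *
      ((2 * (Real.pi / N) * (k : ℝ) + t : ℝ) : ℂ)))
    (hw : ∀ (t : ℝ) (k : ℤ), w t k = (x0 : ℂ) +
      (z t k - (x0 : ℂ)) / ((‖z t k - (x0 : ℂ)‖) ^ 2 : ℝ))
    (κ xc κ' a b : ℝ)
    (hκ : κ = 2 * x0 * Real.cos (2 * (Real.pi / N)) - x0 ^ 3 - 1 / x0)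
    (hxc : xc = ((2 * x0 ^ 2 - 1) * Real.cos (2 * (Real.pi / N)) -
      x0 ^ 4 + x0 ^ 2 - 1) / κ)
    (hκ' : κ' = (x0 ^ 2 + 1) ^ 2 - 4 * x0 ^ 2 * Real.cos (Real.pi / N) ^ 2)
    (ha : a = (1 - x0 ^ 2) * Real.cos (Real.pi / N) / κ')
    (hb : b = Real.cos (Real.pi / N) / Real.sqrt κ') :
    ∀ (t : ℝ) (k : ℤ), ∃! p : ℂ,
      (∃ s : ℝ, p = w t k + s • (w t (k + 1) - w t k)) ∧
      (p.re - xc) ^ 2 / a ^ 2 + p.im ^ 2 / b ^ 2 = 1 := by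
  intro t k
  have hN' : (3 : ℝ) ≤ N := by exact_mod_cast hN
  have hα : 0 < π / N := by positivity
  have hα' : π / N < π / 2 := div_lt_div_of_pos_left pi_pos (by norm_num) (by linarith)
  have hcos : 0 < cos (π / N) := cos_pos_of_mem_Ioo ⟨by linarith, hα'⟩
  have hsin : 0 < sin (π / N) := sin_pos_of_pos_of_lt_pi hα (by linarith [pi_pos])
  have hx0' : x0 ^ 2 ≠ 1 := ((sq_lt_one_iff_abs_lt_one x0).2 hx1).ne
  have hκ'pos : 0 < κ' := hκ' ▸ brocard_kappa_pos hx0' _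
  refine inversion_chord_tangent_brocard (u := 2 * (π / N) * k + t + π / N) hx0' hcos.ne'
    hsin.ne' hκ' ?_ ha ?_ (hw t k) (hw t (k + 1)) ?_ ?_
  · have hx0ne : x0 ≠ 0 := abs_pos.1 hx0
    have hκ_eq : κ = -κ' / x0 := by
      rw [hκ, hκ', cos_two_mul]
      field_simp
      ring
    rw [hxc, hκ_eq, cos_two_mul]
    field_simp
    ring
  · rw [hb, div_pow, sq_sqrt hκ'pos.le]
  · rw [hz, mul_comm]
    congr 3
    ring
  · rw [hz, mul_comm]
    congr 3
    push_cast
    ring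
end
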